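/- arXiv:1911.11133 — 7 statements merged into one kernel-verified Lean document; each statement's English description precedes it below -/
import Mathlib

section
/- Let α_1(x) ≡ 1 and let {α_n}_{n≥2} be continuous complex-valued functions of x ∈ ℝ satisfying the Dirichlet convolution identity α_n(x+y) = ∑_{d∣n} α_d(x)·α_{n/d}(y) for all n ≥ 1 and all x, y ∈ ℝ. Then for every n ≥ 2 and every x ∈ ℝ, α_n(x) = ∑_{k=1}^{Ω(n)} C(x,k) · ∑_{n=d_1 d_2 ⋯ d_k, each d_i ≥ 2} α_{d_1}(1) α_{d_2}(1) ⋯ α_{d_k}(1), where the inner sum is over all ordered k-tuples (d_1,…,d_k) of integers d_i ≥ 2 with product n. -/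
open Finset Polynomial

/-- Generalized binomial coefficient `C(x,k) = x(x-1)⋯(x-k+1)/k!`. -/
noncomputable def genBinom (x : ℂ) (k : ℕ) : ℂ :=
  (∏ i ∈ Finset.range k, (x - (i : ℂ))) / (Nat.factorial k : ℂ)

/-- Sum over all ordered `k`-tuples `(d₁,…,d_k)` of integers `dᵢ ≥ 2` with product `n`
of the products `a d₁ ⋯ a d_k`. -/
noncomputable def tupleProdSum (a : ℕ → ℂ) (n k : ℕ) : ℂ :=
  ∑ d ∈ (Fintype.piFinset fun _ : Fin k => Finset.range (n + 1)).filter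
      (fun d => (∀ i, 2 ≤ d i) ∧ ∏ i, d i = n), ∏ i, a (d i)

lemma desc_smeval (x : ℂ) (k : ℕ) : (descPochhammer ℤ k).smeval x = ∏ i ∈ range k, (x - (i : ℂ)) := by
  induction k with
  | zero => simp [descPochhammer_zero]
  | succ k ih =>
    rw [descPochhammer_succ_right, smeval_mul, ih, prod_range_succ, smeval_sub, smeval_X,
      smeval_natCast]
    ring

lemma genBinom_eq (x : ℂ) (k : ℕ) : genBinom x k = Ring.choose x k := by
  rw [genBinom, ← desc_smeval, Ring.descPochhammer_eq_factorial_smul_choose, nsmul_eq_mul]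
  exact mul_div_cancel_left₀ (Ring.choose x k) (Nat.cast_ne_zero.mpr (Nat.factorial_pos k).ne')

/-- Vandermonde. -/
lemma genBinom_add (x y : ℂ) (k : ℕ) :
    genBinom (x + y) k = ∑ ij ∈ Finset.HasAntidiagonal.antidiagonal k, genBinom x ij.1 * genBinom y ij.2 := by
  simp only [genBinom_eq]
  exact Ring.add_choose_eq k (Commute.all x y)

lemma genBinom_zero (x : ℂ) : genBinom x 0 = 1 := by simp [genBinom]

lemma genBinom_one (x : ℂ) : genBinom x 1 = x := by simp [genBinom]

lemma genBinom_one_eq_zero {k : ℕ} (hk : 2 ≤ k) : genBinom 1 k = 0 := by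
  rw [genBinom, _root_.div_eq_zero_iff]
  left
  exact Finset.prod_eq_zero (Finset.mem_range.mpr (by omega : 1 < k)) (by norm_num)

/-- membership description -/
lemma mem_tupleSet {n k : ℕ} (d : Fin k → ℕ) :
    d ∈ (Fintype.piFinset fun _ : Fin k => Finset.range (n + 1)).filter
      (fun d => (∀ i, 2 ≤ d i) ∧ ∏ i, d i = n) ↔ (∀ i, 2 ≤ d i) ∧ ∏ i, d i = n := by
  rw [Finset.mem_filter, and_iff_right_iff_imp]
  rintro ⟨h2, hp⟩
  rw [Fintype.mem_piFinset]
  intro i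
  rw [Finset.mem_range, Nat.lt_succ_iff, ← hp]
  exact Finset.prod_le_prod_of_subset_of_one_le' (Finset.subset_univ {i}) (fun j _ _ => by
    have := h2 j; omega) |>.trans_eq' (by simp)

lemma tupleProdSum_zero (a : ℕ → ℂ) (n : ℕ) :
    tupleProdSum a n 0 = if n = 1 then 1 else 0 := by
  rw [tupleProdSum]
  have he : (Fintype.piFinset fun _ : Fin 0 => Finset.range (n + 1)) = {fun i => Fin.elim0 i} := by
    ext d
    constructor
    · intro _; rw [Finset.mem_singleton]; exact Subsingleton.elim _ _
    · intro _; rw [Fintype.mem_piFinset]; exact fun i => i.elim0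
  rw [he, Finset.filter_singleton]
  by_cases h : n = 1 <;> simp [h, eq_comm]

lemma cardFactors_prod {ι : Type*} (s : Finset ι) (f : ι → ℕ) (hf : ∀ i ∈ s, f i ≠ 0) :
    ArithmeticFunction.cardFactors (∏ i ∈ s, f i) = ∑ i ∈ s, ArithmeticFunction.cardFactors (f i) := by
  induction s using Finset.cons_induction with
  | empty => simp
  | cons i s his ih =>
    rw [Finset.prod_cons, Finset.sum_cons,
      ArithmeticFunction.cardFactors_mul (hf i (Finset.mem_cons_self i s))
        (Finset.prod_ne_zero_iff.mpr fun j hj => hf j (Finset.mem_cons_of_mem hj)),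
      ih (fun j hj => hf j (Finset.mem_cons_of_mem hj))]

lemma one_le_cardFactors {m : ℕ} (hm : 2 ≤ m) : 1 ≤ ArithmeticFunction.cardFactors m := by
  rw [ArithmeticFunction.cardFactors_apply]
  rcases List.eq_nil_or_concat m.primeFactorsList with h | ⟨l, b, h⟩
  · rw [Nat.primeFactorsList_eq_nil] at h; omega
  · simp [h]

lemma tupleProdSum_eq_zero (a : ℕ → ℂ) {n k : ℕ} (hn : 1 ≤ n)
    (hk : ArithmeticFunction.cardFactors n < k) : tupleProdSum a n k = 0 := by
  rw [tupleProdSum, Finset.sum_eq_zero]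
  intro d hd
  rw [mem_tupleSet] at hd
  obtain ⟨h2, hp⟩ := hd
  exfalso
  have : ArithmeticFunction.cardFactors n = ∑ i : Fin k, ArithmeticFunction.cardFactors (d i) := by
    rw [← hp]; exact cardFactors_prod _ _ (fun i _ => by have := h2 i; omega)
  have hge : k ≤ ∑ i : Fin k, ArithmeticFunction.cardFactors (d i) := by
    calc k = ∑ _i : Fin k, 1 := by simp
    _ ≤ _ := Finset.sum_le_sum fun i _ => one_le_cardFactors (h2 i)
  omega

lemma tupleProdSum_one (a : ℕ → ℂ) {n : ℕ} (hn : 2 ≤ n) : tupleProdSum a n 1 = a n := by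
  rw [tupleProdSum]
  rw [Finset.sum_eq_single (fun _ : Fin 1 => n)]
  · simp
  · intro b hb hbne
    exfalso
    rw [mem_tupleSet] at hb
    apply hbne
    funext i
    have := hb.2
    rw [Fin.prod_univ_one] at this
    have : b 0 = n := this
    rw [Subsingleton.elim i 0, this]
  · intro hb
    exact absurd ((mem_tupleSet _).mpr ⟨fun i => hn, by simp⟩) hb

/-- Key splitting lemma. -/
lemma tupleProdSum_conv (a : ℕ → ℂ) {n : ℕ} (hn : 1 ≤ n) (i j : ℕ) :
    ∑ d ∈ n.divisors, tupleProdSum a d i * tupleProdSum a (n / d) j = tupleProdSum a n (i + j) := by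
  simp only [tupleProdSum, Finset.sum_mul_sum]
  simp only [← Finset.sum_product']
  rw [Finset.sum_sigma']
  refine Finset.sum_nbij' (fun p => Fin.append p.2.1 p.2.2)
    (fun h => ⟨∏ t : Fin i, h (Fin.castAdd j t),
      (fun t => h (Fin.castAdd j t), fun t => h (Fin.natAdd i t))⟩) ?_ ?_ ?_ ?_ ?_
  · rintro ⟨d, f, g⟩ hmem
    simp only [Finset.mem_sigma, Finset.mem_product] at hmem
    obtain ⟨hd, hf, hg⟩ := hmem
    rw [mem_tupleSet] at hf hg ⊢
    obtain ⟨hdvd, hn0⟩ := Nat.mem_divisors.mp hd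
    dsimp only
    constructor
    · intro t
      refine Fin.addCases (fun t => ?_) (fun t => ?_) t
      · rw [Fin.append_left]; exact hf.1 t
      · rw [Fin.append_right]; exact hg.1 t
    · rw [Fin.prod_univ_add]
      simp only [Fin.append_left, Fin.append_right]
      rw [hf.2, hg.2]
      exact Nat.mul_div_cancel' hdvd
  · intro h hmem
    rw [mem_tupleSet] at hmem
    obtain ⟨h2, hp⟩ := hmem
    rw [Fin.prod_univ_add] at hp
    have hd0 : 0 < ∏ t : Fin i, h (Fin.castAdd j t) :=
      Finset.prod_pos fun t _ => by have := h2 (Fin.castAdd j t); omega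
    simp only [Finset.mem_sigma, Finset.mem_product, Nat.mem_divisors, mem_tupleSet]
    exact ⟨⟨⟨_, hp.symm⟩, by omega⟩, ⟨fun t => h2 _, trivial⟩, fun t => h2 _,
      by rw [← hp, Nat.mul_div_cancel_left _ hd0]⟩
  · rintro ⟨d, f, g⟩ hmem
    simp only [Finset.mem_sigma, Finset.mem_product] at hmem
    obtain ⟨hd, hf, hg⟩ := hmem
    rw [mem_tupleSet] at hf hg
    have h1 : (fun t => Fin.append f g (Fin.castAdd j t)) = f := funext (Fin.append_left f g)
    have h2 : (fun t => Fin.append f g (Fin.natAdd i t)) = g := funext (Fin.append_right f g)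
    dsimp only
    rw [h1, h2, hf.2]
  · intro h _
    exact Fin.append_castAdd_natAdd
  · rintro ⟨d, f, g⟩ _
    rw [Fin.prod_univ_add]
    simp only [Fin.append_left, Fin.append_right]


lemma sum_antidiag_aux (M : ℕ) (F : ℕ → ℕ → ℂ)
    (hF : ∀ p : ℕ × ℕ, M < p.1 + p.2 → F p.1 p.2 = 0) :
    ∑ i ∈ range (M+1), ∑ j ∈ range (M+1), F i j
      = ∑ k ∈ range (M+1), ∑ ij ∈ Finset.HasAntidiagonal.antidiagonal k, F ij.1 ij.2 := by
  rw [← Finset.sum_product', Finset.sum_sigma']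
  rw [← Finset.sum_filter_of_ne (p := fun p : ℕ × ℕ => p.1 + p.2 ≤ M)
    (fun p _ hne => by by_contra h; exact hne (hF p (by omega)))]
  refine Finset.sum_nbij' (fun p => ⟨p.1 + p.2, p⟩) (fun q => q.2) ?_ ?_ ?_ ?_ ?_
  · intro p hp
    simp only [Finset.mem_filter, Finset.mem_product, Finset.mem_range] at hp
    simp only [Finset.mem_sigma, Finset.mem_range, Finset.HasAntidiagonal.mem_antidiagonal]
    exact ⟨by omega, trivial⟩
  · intro q hq
    simp only [Finset.mem_sigma, Finset.mem_range, Finset.HasAntidiagonal.mem_antidiagonal] at hq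
    simp only [Finset.mem_filter, Finset.mem_product, Finset.mem_range]
    omega
  · intro p _; rfl
  · intro q hq
    simp only [Finset.mem_sigma, Finset.mem_range, Finset.HasAntidiagonal.mem_antidiagonal] at hq
    exact Sigma.ext (by simp [hq.2]) (heq_of_eq rfl)
  · intro p _; rfl

lemma cardFactors_le_of_dvd {d n : ℕ} (hn : n ≠ 0) (h : d ∣ n) :
    ArithmeticFunction.cardFactors d ≤ ArithmeticFunction.cardFactors n := by
  obtain ⟨e, rfl⟩ := h
  have hd : d ≠ 0 := by rintro rfl; simp at hn
  have he : e ≠ 0 := by rintro rfl; simp at hn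
  rw [ArithmeticFunction.cardFactors_mul hd he]
  omega

noncomputable def P (a : ℕ → ℂ) (n : ℕ) (x : ℂ) : ℂ :=
  ∑ k ∈ Finset.range (ArithmeticFunction.cardFactors n + 1), genBinom x k * tupleProdSum a n k

lemma P_one (a : ℕ → ℂ) (x : ℂ) : P a 1 x = 1 := by
  simp [P, tupleProdSum_zero, genBinom_zero, ArithmeticFunction.cardFactors_one]

lemma P_conv (a : ℕ → ℂ) {n : ℕ} (hn : 1 ≤ n) (x y : ℂ) :
    P a n (x + y) = ∑ d ∈ n.divisors, P a d x * P a (n / d) y := by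
  set M := ArithmeticFunction.cardFactors n with hM
  have hn0 : n ≠ 0 := by omega
  have step1 : ∀ d ∈ n.divisors, P a d x * P a (n / d) y =
      ∑ i ∈ range (M+1), ∑ j ∈ range (M+1),
        (genBinom x i * genBinom y j) * (tupleProdSum a d i * tupleProdSum a (n/d) j) := by
    intro d hd
    obtain ⟨hdvd, -⟩ := Nat.mem_divisors.mp hd
    have hd1 : 1 ≤ d := Nat.pos_of_dvd_of_pos hdvd (by omega)
    have hd2 : 1 ≤ n / d := Nat.div_pos (Nat.le_of_dvd (by omega) hdvd) hd1
    have e1 : P a d x = ∑ i ∈ range (M+1), genBinom x i * tupleProdSum a d i := by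
      rw [P]
      refine Finset.sum_subset (Finset.range_subset_range.mpr ?_) ?_
      · have := cardFactors_le_of_dvd hn0 hdvd; omega
      · intro k _ hk
        rw [Finset.mem_range, not_lt] at hk
        rw [tupleProdSum_eq_zero a hd1 (by omega), mul_zero]
    have e2 : P a (n/d) y = ∑ j ∈ range (M+1), genBinom y j * tupleProdSum a (n/d) j := by
      rw [P]
      refine Finset.sum_subset (Finset.range_subset_range.mpr ?_) ?_
      · have := cardFactors_le_of_dvd hn0 (Nat.div_dvd_of_dvd hdvd); omega
      · intro k _ hk
        rw [Finset.mem_range, not_lt] at hk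
        rw [tupleProdSum_eq_zero a hd2 (by omega), mul_zero]
    rw [e1, e2, Finset.sum_mul_sum]
    exact Finset.sum_congr rfl fun i _ => Finset.sum_congr rfl fun j _ => by ring
  rw [Finset.sum_congr rfl step1]
  rw [Finset.sum_comm]
  have step2 : ∀ i ∈ range (M+1), ∑ d ∈ n.divisors, ∑ j ∈ range (M+1),
      (genBinom x i * genBinom y j) * (tupleProdSum a d i * tupleProdSum a (n/d) j)
      = ∑ j ∈ range (M+1), (genBinom x i * genBinom y j) * tupleProdSum a n (i + j) := by
    intro i _
    rw [Finset.sum_comm]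
    refine Finset.sum_congr rfl fun j _ => ?_
    rw [← Finset.mul_sum, ← tupleProdSum_conv a hn i j]
  rw [Finset.sum_congr rfl step2]
  rw [sum_antidiag_aux M _ (fun p hp => by
    rw [tupleProdSum_eq_zero a hn (by omega), mul_zero])]
  rw [P]
  refine Finset.sum_congr rfl fun k hk => ?_
  rw [genBinom_add, Finset.sum_mul]
  refine Finset.sum_congr rfl fun ij hij => ?_
  rw [Finset.HasAntidiagonal.mem_antidiagonal] at hij
  rw [hij]

lemma P_at_one (a : ℕ → ℂ) {n : ℕ} (hn : 2 ≤ n) : P a n 1 = a n := by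
  have hΩ : 1 ≤ ArithmeticFunction.cardFactors n := one_le_cardFactors hn
  rw [P, Finset.sum_eq_single 1]
  · rw [genBinom_one, one_mul, tupleProdSum_one a hn]
  · intro k hk hkne
    rcases Nat.lt_or_ge k 2 with h2 | h2
    · interval_cases k
      · rw [tupleProdSum_zero]; simp; omega
      · omega
    · rw [genBinom_one_eq_zero h2, zero_mul]
  · intro h; exact absurd (Finset.mem_range.mpr (by omega)) h

theorem stmt_0 (α : ℕ → ℝ → ℂ)
    (hα1 : ∀ x : ℝ, α 1 x = 1)
    (hcont : ∀ n : ℕ, 2 ≤ n → Continuous (α n))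
    (hconv : ∀ n : ℕ, 1 ≤ n → ∀ x y : ℝ,
      α n (x + y) = ∑ d ∈ n.divisors, α d x * α (n / d) y)
    (n : ℕ) (hn : 2 ≤ n) (x : ℝ) :
    α n x = ∑ k ∈ Finset.Icc 1 (ArithmeticFunction.cardFactors n),
      genBinom (x : ℂ) k * tupleProdSum (fun d => α d 1) n k := by
  set a : ℕ → ℂ := fun d => α d 1 with ha
  have hPcont : ∀ m : ℕ, Continuous fun x : ℝ => P a m (x : ℂ) := by
    intro m
    refine continuous_finset_sum _ fun k _ => Continuous.mul ?_ continuous_const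
    refine Continuous.div_const ?_ _
    exact continuous_finset_prod _ fun i _ => Complex.continuous_ofReal.sub continuous_const
  have key : ∀ m : ℕ, 1 ≤ m → ∀ x : ℝ, α m x = P a m (x : ℂ) := by
    intro m
    induction m using Nat.strong_induction_on with
    | _ m IH =>
      intro hm1 x
      rcases eq_or_lt_of_le hm1 with h1 | hm2
      · rw [← h1, hα1, P_one]
      · have hm2 : 2 ≤ m := hm2
        set g : ℝ → ℂ := fun x => α m x - P a m (x : ℂ) with hg
        have hadd : ∀ u v : ℝ, g (u + v) = g u + g v := by
          intro u v
          have hc := hconv m (by omega) u v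
          have hp := P_conv a (show 1 ≤ m by omega) (u : ℂ) (v : ℂ)
          have hcast : ((u + v : ℝ) : ℂ) = (u : ℂ) + (v : ℂ) := by push_cast; ring
          have expand : g (u + v) = ∑ d ∈ m.divisors,
              (α d u * α (m / d) v - P a d (u : ℂ) * P a (m / d) (v : ℂ)) := by
            rw [hg]
            simp only
            rw [hc, hcast, hp, Finset.sum_sub_distrib]
          rw [expand]
          have h1mem : 1 ∈ m.divisors := Nat.one_mem_divisors.mpr (by omega)
          have hmmem : m ∈ m.divisors.erase 1 :=
            Finset.mem_erase.mpr ⟨by omega, Nat.mem_divisors_self m (by omega)⟩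
          rw [← Finset.add_sum_erase _ _ h1mem, ← Finset.add_sum_erase _ _ hmmem]
          have hrest : ∑ d ∈ (m.divisors.erase 1).erase m,
              (α d u * α (m / d) v - P a d (u : ℂ) * P a (m / d) (v : ℂ)) = 0 := by
            refine Finset.sum_eq_zero fun d hd => ?_
            rw [Finset.mem_erase, Finset.mem_erase, Nat.mem_divisors] at hd
            obtain ⟨hdm, hd1, hdvd, -⟩ := hd
            have hd2 : 2 ≤ d := by
              rcases Nat.pos_of_dvd_of_pos hdvd (by omega) with _
              have := Nat.pos_of_dvd_of_pos hdvd (by omega)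
              omega
            have hdlt : d < m := lt_of_le_of_ne (Nat.le_of_dvd (by omega) hdvd) hdm
            have hq1 : 1 ≤ m / d := Nat.div_pos (Nat.le_of_dvd (by omega) hdvd) (by omega)
            have hqlt : m / d < m := Nat.div_lt_self (by omega) (by omega)
            rw [IH d hdlt (by omega) u, IH (m / d) hqlt hq1 v]
            ring
          rw [hrest, add_zero]
          rw [hα1, P_one, Nat.div_one, Nat.div_self (show 0 < m by omega), hα1, P_one]
          ring
        have hgcont : Continuous g := (hcont m hm2).sub (hPcont m)
        have hg1 : g 1 = 0 := by
          rw [hg]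
          simp only
          rw [Complex.ofReal_one, P_at_one a hm2]
          simp [ha]
        set F : ℝ →+ ℂ := AddMonoidHom.mk' g hadd with hF
        have hL := (F.toRealLinearMap hgcont).map_smul x 1
        have : g x = x • g 1 := by
          have h1 : F.toRealLinearMap hgcont x = g x := rfl
          have h2 : F.toRealLinearMap hgcont 1 = g 1 := rfl
          rw [← h1, ← h2, ← hL, smul_eq_mul, mul_one]
        rw [hg1, smul_zero] at this
        have := sub_eq_zero.mp this
        exact this
  rw [key n (by omega) x, P]
  have hsplit : Finset.range (ArithmeticFunction.cardFactors n + 1)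
      = insert 0 (Finset.Icc 1 (ArithmeticFunction.cardFactors n)) := by
    ext k; simp [Finset.mem_range, Finset.mem_Icc]; omega
  rw [hsplit, Finset.sum_insert (by simp)]
  rw [tupleProdSum_zero]
  simp only [if_neg (by omega : ¬ n = 1), mul_zero, zero_add]
end

section
/- Let {α_n}_{n≥1} be a family of Dirichlet convolution polynomials. Then for every n ≥ 2 the derivative of the polynomial α_n satisfies α_n′(x) = ∑_{d∣n, d≥2} α̂_d(0) · α_{n/d}(x) for all x ∈ ℂ, where the sum is over all divisors d of n with d ≥ 2. -/
/-- A family of Dirichlet convolution polynomials: `α 1` is the constant polynomial `1`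
and for all `n ≥ 1` and all complex `x, y`,
`α n (x+y) = ∑_{d ∣ n} α d (x) · α (n/d) (y)`. -/
def IsDirichletConvPolyFamily (α : ℕ → Polynomial ℂ) : Prop :=
  α 1 = 1 ∧ ∀ n : ℕ, 1 ≤ n → ∀ x y : ℂ,
    (α n).eval (x + y) = ∑ d ∈ n.divisors, (α d).eval x * (α (n / d)).eval y

theorem stmt_5 (α : ℕ → Polynomial ℂ) (hα : IsDirichletConvPolyFamily α)
    (αhat : ℕ → Polynomial ℂ)
    (hhat : ∀ n : ℕ, 2 ≤ n → Polynomial.X * αhat n = α n)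
    (n : ℕ) (hn : 2 ≤ n) (x : ℂ) :
    (Polynomial.derivative (α n)).eval x =
      ∑ d ∈ n.divisors.filter (fun d => 2 ≤ d),
        (αhat d).eval 0 * (α (n / d)).eval x := by
  obtain ⟨h1, heq⟩ := hα
  -- polynomial identity in the variable
  have hpoly : (α n).comp (Polynomial.X + Polynomial.C x) =
      ∑ d ∈ n.divisors, α d * Polynomial.C ((α (n / d)).eval x) := by
    apply Polynomial.funext
    intro y
    simp only [Polynomial.eval_comp, Polynomial.eval_add, Polynomial.eval_X,
      Polynomial.eval_C, Polynomial.eval_finset_sum, Polynomial.eval_mul]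
    exact heq n (le_trans (by norm_num) hn) y x
  have hder := congrArg Polynomial.derivative hpoly
  rw [Polynomial.derivative_comp] at hder
  simp only [Polynomial.derivative_add, Polynomial.derivative_X, Polynomial.derivative_C,
    add_zero, mul_one, Polynomial.derivative_sum, Polynomial.derivative_mul,
    Polynomial.derivative_C, mul_zero, add_zero] at hder
  have hev := congrArg (Polynomial.eval (0 : ℂ)) hder
  simp only [Polynomial.eval_comp, Polynomial.eval_add, Polynomial.eval_X, Polynomial.eval_C,
    zero_add, Polynomial.eval_finset_sum, Polynomial.eval_mul, Polynomial.eval_one, one_mul] at hev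
  rw [hev]
  rw [Finset.sum_filter]
  apply Finset.sum_congr rfl
  intro d hd
  by_cases h2 : 2 ≤ d
  · simp only [h2, if_pos]
    have := congrArg (fun p => (Polynomial.derivative p).eval (0 : ℂ)) (hhat d h2)
    simp only [Polynomial.derivative_mul, Polynomial.derivative_X, one_mul,
      Polynomial.eval_add, Polynomial.eval_mul, Polynomial.eval_X, zero_mul, add_zero] at this
    rw [← this]
  · have hd1 : d = 1 := by
      interval_cases d
      · simp at hd
      · rfl
    simp [hd1, h1, h2]
end

section
/- Let {α_n}_{n≥1} be a family of Dirichlet convolution polynomials. Then for every n ≥ 2 and every x ∈ ℂ, α_n(x) = ∑_{d∣n, d≥2} α̂_d(0) · ∫_0^x α_{n/d}(y) dy, where the sum is over all divisors d of n with d ≥ 2 and the integral is along the straight segment from 0 to x. -/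
/-- The integral `∫_0^x p(y) dy` of a polynomial along the straight segment from `0` to `x`,
parametrized as `y = t·x`, `t ∈ [0,1]`, so that `dy = x dt`. -/
noncomputable def segmentIntegral (p : Polynomial ℂ) (x : ℂ) : ℂ :=
  x * ∫ t in (0:ℝ)..1, p.eval ((t : ℂ) * x)

lemma segInt_deriv (q : Polynomial ℂ) (x : ℂ) :
    segmentIntegral (Polynomial.derivative q) x = q.eval x - q.eval 0 := by
  have key : ∀ t : ℝ, HasDerivAt (fun s : ℝ => q.eval ((s : ℂ) * x))
      ((Polynomial.derivative q).eval ((t : ℂ) * x) * x) t := by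
    intro t
    have h1 : HasDerivAt (fun z : ℂ => q.eval (z * x))
        ((Polynomial.derivative q).eval ((t : ℂ) * x) * x) (t : ℂ) := by
      have := (q.hasDerivAt ((t : ℂ) * x)).comp (t : ℂ)
        ((hasDerivAt_id (t : ℂ)).mul_const x)
      rw [one_mul] at this
      exact this
    exact h1.comp_ofReal
  have hint : IntervalIntegrable
      (fun t : ℝ => (Polynomial.derivative q).eval ((t : ℂ) * x) * x)
      MeasureTheory.volume 0 1 := by
    apply Continuous.intervalIntegrable
    fun_prop
  have h := intervalIntegral.integral_eq_sub_of_hasDerivAt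
    (f := fun s : ℝ => q.eval ((s : ℂ) * x)) (fun t _ => key t) hint
  simp only [Complex.ofReal_one, Complex.ofReal_zero, one_mul, zero_mul] at h
  rw [intervalIntegral.integral_mul_const] at h
  unfold segmentIntegral
  rw [mul_comm]
  exact h

theorem stmt_6 (α : ℕ → Polynomial ℂ) (hα : IsDirichletConvPolyFamily α)
    (αhat : ℕ → Polynomial ℂ)
    (hhat : ∀ n : ℕ, 2 ≤ n → Polynomial.X * αhat n = α n)
    (n : ℕ) (hn : 2 ≤ n) (x : ℂ) :
    (α n).eval x =
      ∑ d ∈ n.divisors.filter (fun d => 2 ≤ d),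
        (αhat d).eval 0 * segmentIntegral (α (n / d)) x := by
  obtain ⟨h1, hconv⟩ := hα
  -- derivative identity
  have hderiv : ∀ y : ℂ, (Polynomial.derivative (α n)).eval y
      = ∑ d ∈ n.divisors.filter (fun d => 2 ≤ d),
          (αhat d).eval 0 * (α (n / d)).eval y := by
    intro y
    have hp : (α n).comp (Polynomial.X + Polynomial.C y)
        = ∑ d ∈ n.divisors, α d * Polynomial.C ((α (n / d)).eval y) := by
      apply Polynomial.funext
      intro z
      simp [Polynomial.eval_finset_sum, hconv n (by omega) z y]
    have hd := congrArg Polynomial.derivative hp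
    rw [Polynomial.derivative_comp] at hd
    have he := congrArg (Polynomial.eval (0 : ℂ)) hd
    simp only [Polynomial.derivative_add, Polynomial.derivative_X, Polynomial.derivative_C,
      add_zero, Polynomial.eval_mul, Polynomial.eval_comp, Polynomial.eval_add,
      Polynomial.eval_X, Polynomial.eval_C, Polynomial.eval_one, zero_add, one_mul,
      Polynomial.eval_finset_sum, Polynomial.derivative_mul, Polynomial.eval_zero,
      mul_zero, mul_one] at he
    rw [he, map_sum Polynomial.derivative, Polynomial.eval_finset_sum]
    rw [Finset.sum_filter]
    apply Finset.sum_congr rfl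
    intro d hdmem
    have hd1 : 1 ≤ d := Nat.one_le_iff_ne_zero.mpr (Nat.pos_of_mem_divisors hdmem).ne'
    by_cases h2 : 2 ≤ d
    · rw [if_pos h2, ← hhat d h2]
      simp [Polynomial.derivative_mul]
    · have : d = 1 := by omega
      subst this
      rw [if_neg h2, h1]
      simp [Polynomial.derivative_mul]
  -- evaluate
  have h0 : (α n).eval 0 = 0 := by rw [← hhat n hn]; simp
  have hs : (α n).eval x = segmentIntegral (Polynomial.derivative (α n)) x := by
    rw [segInt_deriv, h0, sub_zero]
  rw [hs]
  unfold segmentIntegral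
  have : (∫ t in (0:ℝ)..1, (Polynomial.derivative (α n)).eval ((t : ℂ) * x))
      = ∫ t in (0:ℝ)..1, ∑ d ∈ n.divisors.filter (fun d => 2 ≤ d),
          (αhat d).eval 0 * (α (n / d)).eval ((t : ℂ) * x) := by
    congr 1
    ext t
    exact hderiv _
  rw [this, intervalIntegral.integral_finset_sum, Finset.mul_sum]
  · apply Finset.sum_congr rfl
    intro d _
    rw [intervalIntegral.integral_const_mul]
    ring
  · intro d _
    apply Continuous.intervalIntegrable
    fun_prop
end

section
/- Let {α_n}_{n≥1} be a family of Dirichlet convolution polynomials. Then for every n ≥ 2 and every x ∈ ℂ, ln(n) · α̂_n(x) = ∑_{d∣n, d≥2} ln(d) · α̂_d(0) · α_{n/d}(x), where the sum is over all divisors d of n with d ≥ 2. -/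
open Polynomial Finset

noncomputable def bb (α : ℕ → Polynomial ℂ) (d : ℕ) : ℂ := ((α d).derivative).eval 0
noncomputable def ββ (α : ℕ → Polynomial ℂ) (d : ℕ) : ℂ := (Real.log d : ℂ) * bb α d

lemma lemA (α : ℕ → Polynomial ℂ) (hα : IsDirichletConvPolyFamily α) (n : ℕ) (hn : 1 ≤ n) :
    derivative (α n) = ∑ d ∈ n.divisors, C (bb α d) * α (n / d) := by
  apply Polynomial.funext
  intro x
  have hfun : (fun y : ℂ => ∑ d ∈ n.divisors, (α d).eval y * (α (n/d)).eval x)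
      = (fun y : ℂ => (α n).eval (x + y)) := by
    funext y
    rw [add_comm, hα.2 n hn y x]
  have h1 : HasDerivAt (fun y : ℂ => (α n).eval (x + y)) ((α n).derivative.eval x) 0 := by
    have := ((α n).hasDerivAt (x + 0)).comp 0 ((hasDerivAt_id (0:ℂ)).const_add x)
    simpa [Function.comp_def] using this
  have h2 : HasDerivAt (fun y : ℂ => ∑ d ∈ n.divisors, (α d).eval y * (α (n/d)).eval x)
      (∑ d ∈ n.divisors, ((α d).derivative.eval 0) * (α (n/d)).eval x) 0 :=
    HasDerivAt.fun_sum fun d _ => ((α d).hasDerivAt 0).mul_const _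
  rw [hfun] at h2
  have := h1.unique h2
  simpa [bb, eval_finset_sum] using this

lemma mem_swap {n d e : ℕ} (hp : d ∣ n ∧ n ≠ 0 ∧ (e ∣ n / d ∧ n / d ≠ 0)) :
    e ∣ n ∧ n ≠ 0 ∧ (d ∣ n / e ∧ n / e ≠ 0) := by
  obtain ⟨hd, hn0, he, -⟩ := hp
  have hde : d * e ∣ n := (Nat.dvd_div_iff_mul_dvd hd).mp he
  have he' : e ∣ n := (dvd_of_mul_left_dvd hde)
  refine ⟨he', hn0, (Nat.dvd_div_iff_mul_dvd he').mpr (by rwa [mul_comm] at hde), ?_⟩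
  exact (Nat.div_pos (Nat.le_of_dvd (Nat.pos_of_ne_zero hn0) he')
    (Nat.pos_of_dvd_of_pos he' (Nat.pos_of_ne_zero hn0))).ne'

lemma swap_divisors {M : Type*} [AddCommMonoid M] (n : ℕ) (f : ℕ → ℕ → M) :
    ∑ d ∈ n.divisors, ∑ e ∈ (n/d).divisors, f d e
      = ∑ d ∈ n.divisors, ∑ e ∈ (n/d).divisors, f e d := by
  rw [Finset.sum_sigma', Finset.sum_sigma']
  refine Finset.sum_nbij' (fun p => ⟨p.2, p.1⟩) (fun p => ⟨p.2, p.1⟩) ?_ ?_ ?_ ?_ ?_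
  · rintro ⟨d, e⟩ hp
    simp only [Finset.mem_sigma, Nat.mem_divisors] at hp ⊢
    exact mem_swap ⟨hp.1.1, hp.1.2, hp.2.1, hp.2.2⟩ |> fun h => ⟨⟨h.1, h.2.1⟩, h.2.2.1, h.2.2.2⟩
  · rintro ⟨d, e⟩ hp
    simp only [Finset.mem_sigma, Nat.mem_divisors] at hp ⊢
    exact mem_swap ⟨hp.1.1, hp.1.2, hp.2.1, hp.2.2⟩ |> fun h => ⟨⟨h.1, h.2.1⟩, h.2.2.1, h.2.2.2⟩
  · rintro ⟨d, e⟩ hp; rfl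
  · rintro ⟨d, e⟩ hp; rfl
  · rintro ⟨d, e⟩ hp; rfl

lemma lemB (α : ℕ → Polynomial ℂ) (hα : IsDirichletConvPolyFamily α)
    (αhat : ℕ → Polynomial ℂ) (hhat : ∀ n : ℕ, 2 ≤ n → X * αhat n = α n) :
    ∀ n : ℕ, 1 ≤ n → (Real.log n : ℂ) • α n
      = X * ∑ d ∈ n.divisors, C (ββ α d) * α (n / d) := by
  intro n
  induction n using Nat.strong_induction_on with
  | _ n ih =>
  intro hn
  rcases eq_or_lt_of_le hn with h1 | hn2
  · rw [← h1]
    simp [ββ, Real.log_one]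
  · have hn2 : 2 ≤ n := hn2
    have hn0 : n ≠ 0 := by omega
    have hnpos : 0 < n := by omega
    have hb1 : bb α 1 = 0 := by simp [bb, hα.1]
    have hα0 : (α n).coeff 0 = 0 := by
      rw [← hhat n hn2, mul_coeff_zero, coeff_X_zero, zero_mul]
    have hdivpos : ∀ d ∈ n.divisors, 0 < n / d := by
      intro d hd
      obtain ⟨hdvd, -⟩ := Nat.mem_divisors.mp hd
      exact Nat.div_pos (Nat.le_of_dvd hnpos hdvd) (Nat.pos_of_dvd_of_pos hdvd hnpos)
    have hlog : ∀ d ∈ n.divisors, (Real.log n : ℂ)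
        = (Real.log d : ℂ) + (Real.log ((n/d : ℕ)) : ℂ) := by
      intro d hd
      obtain ⟨hdvd, -⟩ := Nat.mem_divisors.mp hd
      have hdpos : 0 < d := Nat.pos_of_dvd_of_pos hdvd hnpos
      have hq : ((n / d : ℕ) : ℝ) * (d : ℝ) = (n : ℝ) := by
        rw [← Nat.cast_mul, Nat.div_mul_cancel hdvd]
      have hr : Real.log n = Real.log d + Real.log ((n/d : ℕ)) := by
        rw [← hq, Real.log_mul (by exact_mod_cast (hdivpos d hd).ne') (by exact_mod_cast hdpos.ne')]
        ring
      rw [hr]; push_cast; ring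
    have hIH : ∀ d ∈ n.divisors, C (bb α d) * ((Real.log ((n/d : ℕ)) : ℂ) • α (n/d))
        = C (bb α d) * (X * ∑ e ∈ (n/d).divisors, C (ββ α e) * α (n/d/e)) := by
      intro d hd
      obtain ⟨hdvd, -⟩ := Nat.mem_divisors.mp hd
      by_cases hd2 : 2 ≤ d
      · rw [ih (n/d) (Nat.div_lt_self hnpos hd2) (hdivpos d hd)]
      · have hd1 : d = 1 := by
          have := Nat.pos_of_mem_divisors hd; omega
        rw [hd1, hb1]; simp
    -- E1 : derivative of LHS
    have E1 : derivative ((Real.log n : ℂ) • α n)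
        = (∑ d ∈ n.divisors, C (ββ α d) * α (n/d))
          + X * ∑ d ∈ n.divisors, C (bb α d) * ∑ e ∈ (n/d).divisors, C (ββ α e) * α (n/d/e) := by
      rw [derivative_smul, lemA α hα n hn, Finset.smul_sum]
      have step : ∀ d ∈ n.divisors, (Real.log n : ℂ) • (C (bb α d) * α (n/d))
          = C (ββ α d) * α (n/d)
            + X * (C (bb α d) * ∑ e ∈ (n/d).divisors, C (ββ α e) * α (n/d/e)) := by
        intro d hd
        have h2 : (Real.log n : ℂ) • (C (bb α d) * α (n/d))
            = C (ββ α d) * α (n/d) + C (bb α d) * ((Real.log ((n/d : ℕ)) : ℂ) • α (n/d)) := by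
          rw [hlog d hd, ββ, smul_eq_C_mul, smul_eq_C_mul, map_add, C_mul]
          ring
        rw [h2, hIH d hd]
        ring
      rw [Finset.sum_congr rfl step, Finset.sum_add_distrib, Finset.mul_sum]
    -- E2 : derivative of RHS
    have E2 : derivative (X * ∑ d ∈ n.divisors, C (ββ α d) * α (n/d))
        = (∑ d ∈ n.divisors, C (ββ α d) * α (n/d))
          + X * ∑ d ∈ n.divisors, C (ββ α d) * ∑ e ∈ (n/d).divisors, C (bb α e) * α (n/d/e) := by
      rw [derivative_mul, derivative_X, one_mul, derivative_sum]
      congr 1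
      congr 1
      refine Finset.sum_congr rfl fun d hd => ?_
      rw [derivative_mul, derivative_C, zero_mul, zero_add,
        lemA α hα (n/d) (hdivpos d hd)]
    -- swap
    have Eswap : ∑ d ∈ n.divisors, C (bb α d) * ∑ e ∈ (n/d).divisors, C (ββ α e) * α (n/d/e)
        = ∑ d ∈ n.divisors, C (ββ α d) * ∑ e ∈ (n/d).divisors, C (bb α e) * α (n/d/e) := by
      have h1 : ∑ d ∈ n.divisors, C (bb α d) * ∑ e ∈ (n/d).divisors, C (ββ α e) * α (n/d/e)
          = ∑ d ∈ n.divisors, ∑ e ∈ (n/d).divisors,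
              C (bb α d) * C (ββ α e) * α (n/(d*e)) := by
        refine Finset.sum_congr rfl fun d _ => ?_
        rw [Finset.mul_sum]
        exact Finset.sum_congr rfl fun e _ => by rw [Nat.div_div_eq_div_mul, mul_assoc]
      have h2 : ∑ d ∈ n.divisors, C (ββ α d) * ∑ e ∈ (n/d).divisors, C (bb α e) * α (n/d/e)
          = ∑ d ∈ n.divisors, ∑ e ∈ (n/d).divisors,
              C (bb α e) * C (ββ α d) * α (n/(e*d)) := by
        refine Finset.sum_congr rfl fun d _ => ?_
        rw [Finset.mul_sum]
        refine Finset.sum_congr rfl fun e _ => ?_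
        rw [Nat.div_div_eq_div_mul, mul_comm e d]
        ring
      rw [h1, h2]
      exact swap_divisors n (fun d e => C (bb α d) * C (ββ α e) * α (n/(d*e)))
    have key : derivative ((Real.log n : ℂ) • α n
        - X * ∑ d ∈ n.divisors, C (ββ α d) * α (n/d)) = 0 := by
      rw [derivative_sub, E1, E2, Eswap]
      ring
    have hc : ((Real.log n : ℂ) • α n
        - X * ∑ d ∈ n.divisors, C (ββ α d) * α (n/d)).coeff 0 = 0 := by
      simp [coeff_smul, hα0, mul_coeff_zero, coeff_X_zero]
    have := Polynomial.eq_C_of_derivative_eq_zero key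
    rw [hc, map_zero, sub_eq_zero] at this
    exact this

theorem stmt_7 (α : ℕ → Polynomial ℂ) (hα : IsDirichletConvPolyFamily α)
    (αhat : ℕ → Polynomial ℂ)
    (hhat : ∀ n : ℕ, 2 ≤ n → Polynomial.X * αhat n = α n)
    (n : ℕ) (hn : 2 ≤ n) (x : ℂ) :
    (Real.log n : ℂ) * (αhat n).eval x =
      ∑ d ∈ n.divisors.filter (fun d => 2 ≤ d),
        (Real.log d : ℂ) * (αhat d).eval 0 * (α (n / d)).eval x := by
  have hbval : ∀ d : ℕ, 2 ≤ d → bb α d = (αhat d).eval 0 := by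
    intro d hd2
    rw [bb, ← hhat d hd2, derivative_mul, derivative_X]
    simp
  have hB := lemB α hα αhat hhat n (by omega)
  rw [← hhat n hn, smul_eq_C_mul] at hB
  have hB2 : X * (C (Real.log n : ℂ) * αhat n)
      = X * ∑ d ∈ n.divisors, C (ββ α d) * α (n/d) := by
    linear_combination hB
  have hcancel := mul_left_cancel₀ (Polynomial.X_ne_zero (R := ℂ)) hB2
  have hev := congrArg (Polynomial.eval x) hcancel
  simp only [eval_mul, eval_C, eval_finset_sum] at hev
  rw [hev, Finset.sum_filter]
  refine Finset.sum_congr rfl fun d hd => ?_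
  by_cases hd2 : 2 ≤ d
  · rw [if_pos hd2, ββ, hbval d hd2, mul_assoc]
  · have hd1 : d = 1 := by have := Nat.pos_of_mem_divisors hd; omega
    rw [if_neg hd2, hd1]
    simp [ββ, Real.log_one]
end

section
/- Let {α_n}_{n≥1} be a family of Dirichlet convolution polynomials and suppose there exists a nonzero x₀ ∈ ℂ such that the arithmetic function n ↦ α_n(x₀) is multiplicative, i.e. α_{mn}(x₀) = α_m(x₀)·α_n(x₀) for all coprime positive integers m and n. Then for every x ∈ ℂ the arithmetic function n ↦ α_n(x) is multiplicative. -/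
noncomputable def AF (α : ℕ → Polynomial ℂ) (x : ℂ) : ArithmeticFunction ℂ :=
  ⟨fun n => if n = 0 then 0 else (α n).eval x, by simp⟩

lemma AF_apply (α : ℕ → Polynomial ℂ) (x : ℂ) {n : ℕ} (hn : n ≠ 0) :
    AF α x n = (α n).eval x := by simp [AF, hn]

lemma AF_add (α : ℕ → Polynomial ℂ) (hα : IsDirichletConvPolyFamily α) (x y : ℂ) :
    AF α (x + y) = AF α x * AF α y := by
  ext n
  rcases eq_or_ne n 0 with rfl | hn
  · simp [AF]
  rw [AF_apply α _ hn, ArithmeticFunction.mul_apply, hα.2 n (Nat.one_le_iff_ne_zero.2 hn),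
    ← Nat.sum_divisorsAntidiagonal (fun d e => (α d).eval x * (α e).eval y)]
  refine Finset.sum_congr rfl fun p hp => ?_
  obtain ⟨h1, h2⟩ := Nat.mem_divisorsAntidiagonal.mp hp
  have hp1 : p.1 ≠ 0 := fun h => hn (by simp [← h1, h])
  have hp2 : p.2 ≠ 0 := fun h => hn (by simp [← h1, h])
  rw [AF_apply α x hp1, AF_apply α y hp2]

theorem stmt_8 (α : ℕ → Polynomial ℂ) (hα : IsDirichletConvPolyFamily α)
    (x₀ : ℂ) (hx₀ : x₀ ≠ 0)
    (hmult : ∀ m n : ℕ, 0 < m → 0 < n → Nat.Coprime m n →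
      (α (m * n)).eval x₀ = (α m).eval x₀ * (α n).eval x₀) :
    ∀ x : ℂ, ∀ m n : ℕ, 0 < m → 0 < n → Nat.Coprime m n →
      (α (m * n)).eval x = (α m).eval x * (α n).eval x := by
  have hone : (α 1).eval x₀ = 1 := by rw [hα.1]; simp
  have hm0 : (AF α x₀).IsMultiplicative := by
    constructor
    · rw [AF_apply α x₀ one_ne_zero, hone]
    · intro m n hmn
      rcases eq_or_ne m 0 with rfl | hm
      · simp [AF]
      rcases eq_or_ne n 0 with rfl | hn
      · simp [AF]
      rw [AF_apply α x₀ (Nat.mul_ne_zero hm hn), AF_apply α x₀ hm, AF_apply α x₀ hn]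
      exact hmult m n (Nat.pos_of_ne_zero hm) (Nat.pos_of_ne_zero hn) hmn
  have hk : ∀ k : ℕ, (AF α ((k + 1 : ℕ) * x₀)).IsMultiplicative := by
    intro k
    induction k with
    | zero => simpa using hm0
    | succ k ih =>
      have : ((k + 2 : ℕ) : ℂ) * x₀ = ((k + 1 : ℕ) : ℂ) * x₀ + x₀ := by
        push_cast; ring
      rw [this, AF_add α hα]
      exact ih.mul hm0
  intro x m n hm hn hmn
  set Q : Polynomial ℂ := α (m * n) - α m * α n with hQ
  have hQ0 : Q = 0 := by
    apply Polynomial.eq_zero_of_infinite_isRoot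
    apply Set.Infinite.mono (s := Set.range fun k : ℕ => ((k + 1 : ℕ) : ℂ) * x₀)
    · rintro _ ⟨k, rfl⟩
      have h := (hk k).2 hmn
      rw [AF_apply α _ (Nat.mul_ne_zero hm.ne' hn.ne'), AF_apply α _ hm.ne',
        AF_apply α _ hn.ne'] at h
      push_cast at h
      simp [Polynomial.IsRoot, hQ, h]
    · apply Set.infinite_range_of_injective
      intro a b hab
      have : ((a + 1 : ℕ) : ℂ) = ((b + 1 : ℕ) : ℂ) := mul_right_cancel₀ hx₀ hab
      exact Nat.succ_injective (by exact_mod_cast this)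
  have := congrArg (Polynomial.eval x) hQ0
  simp only [hQ, Polynomial.eval_sub, Polynomial.eval_mul, Polynomial.eval_zero,
    sub_eq_zero] at this
  exact this
end

section
/- Let {α_n}_{n≥1} be a family of Dirichlet convolution polynomials and fix w ∈ ℂ. Define β_1 to be the constant polynomial 1 and, for n ≥ 2, β_n(x) := x · α̂_n(x + w·ln(n)); equivalently β_n(x) = (x/(x + w·ln(n)))·α_n(x + w·ln(n)) whenever x + w·ln(n) ≠ 0. Then {β_n}_{n≥1} is also a family of Dirichlet convolution polynomials: for all n ≥ 1 and all x, y ∈ ℂ, β_n(x+y) = ∑_{d∣n} β_d(x)·β_{n/d}(y). -/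
open Polynomial Finset

namespace DCPaux


/-! ### Boolean masks -/

def masks : ℕ → Finset (List Bool)
  | 0 => {[]}
  | k+1 => (masks k).image (List.cons true) ∪ (masks k).image (List.cons false)

lemma mem_masks : ∀ {k : ℕ} {m : List Bool}, m ∈ masks k ↔ m.length = k := by
  intro k
  induction k with
  | zero => intro m; simp [masks, List.length_eq_zero_iff]
  | succ k ih =>
    intro m
    cases m with
    | nil => simp [masks]
    | cons b m' =>
      cases b <;> simp [masks, ih]

lemma sum_masks_succ {M : Type*} [AddCommMonoid M] (k : ℕ) (f : List Bool → M) :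
    ∑ m ∈ masks (k+1), f m = (∑ m ∈ masks k, f (true :: m)) + ∑ m ∈ masks k, f (false :: m) := by
  rw [show masks (k+1) = (masks k).image (List.cons true) ∪ (masks k).image (List.cons false) from rfl]
  rw [Finset.sum_union]
  · rw [Finset.sum_image (by intro a _ b _ h; injection h),
      Finset.sum_image (by intro a _ b _ h; injection h)]
  · rw [Finset.disjoint_left]
    rintro a ha hb
    simp only [Finset.mem_image] at ha hb
    obtain ⟨a1, _, rfl⟩ := ha
    obtain ⟨a2, _, h⟩ := hb
    injection h with h1 h2
    simp at h1

/-! ### Selection and merge -/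

variable {γ : Type*}

def selT : List Bool → List γ → List γ
  | true :: m, a :: L => a :: selT m L
  | false :: m, _ :: L => selT m L
  | _, _ => []

def selF : List Bool → List γ → List γ
  | true :: m, _ :: L => selF m L
  | false :: m, a :: L => a :: selF m L
  | _, _ => []

def merge : List Bool → List γ → List γ → List γ
  | true :: m, a :: A, B => a :: merge m A B
  | false :: m, A, b :: B => b :: merge m A B
  | _, _, _ => []

@[simp] lemma selT_nil (L : List γ) : selT [] L = [] := rfl
@[simp] lemma selF_nil (L : List γ) : selF [] L = [] := rfl
@[simp] lemma selT_cons_true (m : List Bool) (a : γ) (L : List γ) :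
    selT (true :: m) (a :: L) = a :: selT m L := rfl
@[simp] lemma selT_cons_false (m : List Bool) (a : γ) (L : List γ) :
    selT (false :: m) (a :: L) = selT m L := rfl
@[simp] lemma selF_cons_true (m : List Bool) (a : γ) (L : List γ) :
    selF (true :: m) (a :: L) = selF m L := rfl
@[simp] lemma selF_cons_false (m : List Bool) (a : γ) (L : List γ) :
    selF (false :: m) (a :: L) = a :: selF m L := rfl

lemma selT_map {δ : Type*} (f : γ → δ) : ∀ (m : List Bool) (L : List γ),
    selT m (L.map f) = (selT m L).map f
  | [], L => by cases L <;> simp [selT]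
  | b :: m, [] => by cases b <;> simp [selT]
  | true :: m, a :: L => by simp [selT_map f m L]
  | false :: m, a :: L => by simp [selT_map f m L]

lemma selF_map {δ : Type*} (f : γ → δ) : ∀ (m : List Bool) (L : List γ),
    selF m (L.map f) = (selF m L).map f
  | [], L => by cases L <;> simp [selF]
  | b :: m, [] => by cases b <;> simp [selF]
  | true :: m, a :: L => by simp [selF_map f m L]
  | false :: m, a :: L => by simp [selF_map f m L]

lemma length_selT : ∀ {m : List Bool} {L : List γ}, m.length = L.length →
    (selT m L).length = m.count true
  | [], L, _ => by simp
  | true :: m, a :: L, h => by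
      simp only [selT_cons_true, List.length_cons, List.count_cons_self]
      rw [length_selT (by simpa using h)]
  | false :: m, a :: L, h => by
      simp only [selT_cons_false]
      rw [length_selT (m := m) (L := L) (by simpa using h)]
      simp [List.count_cons]
  | b :: m, [], h => by simp at h

lemma length_selF : ∀ {m : List Bool} {L : List γ}, m.length = L.length →
    (selF m L).length = m.count false
  | [], L, _ => by simp
  | true :: m, a :: L, h => by
      simp only [selF_cons_true]
      rw [length_selF (m := m) (L := L) (by simpa using h)]
      simp [List.count_cons]
  | false :: m, a :: L, h => by
      simp only [selF_cons_false, List.length_cons, List.count_cons_self]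
      rw [length_selF (by simpa using h)]
  | b :: m, [], h => by simp at h

lemma count_true_add_count_false (m : List Bool) : m.count true + m.count false = m.length := by
  induction m with
  | nil => simp
  | cons b m ih => cases b <;> simp [List.count_cons] <;> omega

lemma merge_selT_selF : ∀ {m : List Bool} {L : List γ}, m.length = L.length →
    merge m (selT m L) (selF m L) = L
  | [], [], _ => rfl
  | [], a :: L, h => by simp at h
  | b :: m, [], h => by simp at h
  | true :: m, a :: L, h => by
      simp only [selT_cons_true, selF_cons_true, merge]
      rw [merge_selT_selF (by simpa using h)]
  | false :: m, a :: L, h => by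
      simp only [selT_cons_false, selF_cons_false, merge]
      rw [merge_selT_selF (by simpa using h)]

lemma selT_merge : ∀ {m : List Bool} {A B : List γ}, m.count true = A.length →
    m.count false = B.length → selT m (merge m A B) = A ∧ selF m (merge m A B) = B ∧
      (merge m A B).length = m.length
  | [], A, B, h1, h2 => by
      simp only [List.count_nil] at h1 h2
      simp [merge, (List.length_eq_zero_iff).1 h1.symm, (List.length_eq_zero_iff).1 h2.symm]
  | true :: m, [], B, h1, h2 => by simp [List.count_cons] at h1
  | false :: m, A, [], h1, h2 => by simp [List.count_cons] at h2
  | true :: m, a :: A, B, h1, h2 => by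
      have h1' : m.count true = A.length := by simpa using h1
      have h2' : m.count false = B.length := by simpa [List.count_cons] using h2
      obtain ⟨e1, e2, e3⟩ := selT_merge h1' h2'
      simp [merge, e1, e2, e3]
  | false :: m, A, b :: B, h1, h2 => by
      have h1' : m.count true = A.length := by simpa [List.count_cons] using h1
      have h2' : m.count false = B.length := by simpa using h2
      obtain ⟨e1, e2, e3⟩ := selT_merge h1' h2'
      simp [merge, e1, e2, e3]

lemma mem_merge : ∀ {m : List Bool} {A B : List γ} {x : γ}, x ∈ merge m A B → x ∈ A ∨ x ∈ B
  | [], A, B, x, h => by simp [merge] at h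
  | true :: m, [], B, x, h => by simp [merge] at h
  | false :: m, A, [], x, h => by cases A <;> simp [merge] at h
  | true :: m, a :: A, B, x, h => by
      rcases List.mem_cons.1 h with h | h
      · exact Or.inl (by simp [h])
      · rcases mem_merge h with h | h
        · exact Or.inl (List.mem_cons_of_mem _ h)
        · exact Or.inr h
  | false :: m, A, b :: B, x, h => by
      rcases List.mem_cons.1 h with h | h
      · exact Or.inr (by simp [h])
      · rcases mem_merge (m := m) h with h | h
        · exact Or.inl h
        · exact Or.inr (List.mem_cons_of_mem _ h)

lemma prod_merge {M : Type*} [CommMonoid M] : ∀ {m : List Bool} {A B : List M},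
    m.count true = A.length → m.count false = B.length →
    (merge m A B).prod = A.prod * B.prod
  | [], A, B, h1, h2 => by
      simp only [List.count_nil] at h1 h2
      simp [merge, (List.length_eq_zero_iff).1 h1.symm, (List.length_eq_zero_iff).1 h2.symm]
  | true :: m, [], B, h1, h2 => by simp [List.count_cons] at h1
  | false :: m, A, [], h1, h2 => by simp [List.count_cons] at h2
  | true :: m, a :: A, B, h1, h2 => by
      have h1' : m.count true = A.length := by simpa using h1
      have h2' : m.count false = B.length := by simpa [List.count_cons] using h2
      simp only [merge, List.prod_cons]
      rw [prod_merge h1' h2', mul_assoc]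
  | false :: m, A, b :: B, h1, h2 => by
      have h1' : m.count true = A.length := by simpa [List.count_cons] using h1
      have h2' : m.count false = B.length := by simpa using h2
      simp only [merge, List.prod_cons]
      rw [prod_merge h1' h2', mul_left_comm]

lemma prod_selT_selF {M : Type*} [CommMonoid M] {m : List Bool} {L : List M}
    (h : m.length = L.length) : (selT m L).prod * (selF m L).prod = L.prod := by
  conv_rhs => rw [← merge_selT_selF h]
  rw [prod_merge (length_selT h).symm (length_selF h).symm]

lemma card_masks_filter : ∀ (k i : ℕ),
    ((masks k).filter (fun m => m.count true = i)).card = k.choose i := by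
  intro k
  induction k with
  | zero =>
    intro i
    cases i with
    | zero =>
      rw [show masks 0 = {[]} from rfl, Finset.filter_singleton]
      simp
    | succ i =>
      rw [show masks 0 = {[]} from rfl, Finset.filter_singleton]
      simp [Nat.choose]
  | succ k ih =>
    intro i
    rw [show masks (k+1) = (masks k).image (List.cons true) ∪ (masks k).image (List.cons false)
      from rfl, Finset.filter_union, Finset.card_union_of_disjoint]
    · rw [Finset.filter_image, Finset.filter_image]
      rw [Finset.card_image_of_injective _ (fun a b h => by injection h),
        Finset.card_image_of_injective _ (fun a b h => by injection h)]
      cases i with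
      | zero =>
        have e1 : (Finset.filter (fun m => List.count true (true :: m) = 0) (masks k)) = ∅ := by
          ext m; simp [List.count_cons]
        have e2 : (Finset.filter (fun m => List.count true (false :: m) = 0) (masks k))
            = (Finset.filter (fun m => List.count true m = 0) (masks k)) := by
          apply Finset.filter_congr
          intro m _; simp [List.count_cons]
        rw [e1, e2]
        simpa using ih 0
      | succ i =>
        have e1 : (Finset.filter (fun m => List.count true (true :: m) = i + 1) (masks k))
            = (Finset.filter (fun m => List.count true m = i) (masks k)) := by
          apply Finset.filter_congr
          intro m _; simp [List.count_cons]
        have e2 : (Finset.filter (fun m => List.count true (false :: m) = i + 1) (masks k))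
            = (Finset.filter (fun m => List.count true m = i + 1) (masks k)) := by
          apply Finset.filter_congr
          intro m _; simp [List.count_cons]
        rw [e1, e2, ih i, ih (i+1), Nat.choose_succ_succ]
    · apply Finset.disjoint_filter_filter
      rw [Finset.disjoint_left]
      rintro a ha hb
      simp only [Finset.mem_image] at ha hb
      obtain ⟨a1, _, rfl⟩ := ha
      obtain ⟨a2, _, h⟩ := hb
      injection h with h1 h2
      simp at h1



/-! ### Ordered factorizations -/

def Facts : ℕ → Finset (List ℕ)
  | n =>
    if h : 2 ≤ n then
      ((n.divisors.filter (fun d => 2 ≤ d)).attach).biUnion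
        (fun d =>
          have h2 : n / d.1 < n := by
            have hd := d.2
            simp only [Finset.mem_filter, Nat.mem_divisors] at hd
            exact Nat.div_lt_self (by omega) (by omega)
          ((Facts (n / d.1)).image (List.cons d.1)))
    else if n = 1 then {[]} else ∅

lemma Facts_one : Facts 1 = {[]} := by rw [Facts]; norm_num

lemma Facts_zero : Facts 0 = ∅ := by rw [Facts]; norm_num

lemma Facts_eq {n : ℕ} (h : 2 ≤ n) : Facts n =
    ((n.divisors.filter (fun d => 2 ≤ d)).attach).biUnion
      (fun d => ((Facts (n / d.1)).image (List.cons d.1))) := by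
  conv_lhs => rw [Facts]
  rw [dif_pos h]

lemma sum_Facts {M : Type*} [AddCommMonoid M] {n : ℕ} (h : 2 ≤ n) (f : List ℕ → M) :
    ∑ L ∈ Facts n, f L =
      ∑ d ∈ n.divisors.filter (fun d => 2 ≤ d), ∑ A ∈ Facts (n / d), f (d :: A) := by
  rw [Facts_eq h, Finset.sum_biUnion, ← Finset.sum_attach (n.divisors.filter (fun d => 2 ≤ d))
    (fun d => ∑ A ∈ Facts (n / d), f (d :: A))]
  · apply Finset.sum_congr rfl
    intro d _
    rw [Finset.sum_image (by intro a _ b _ h; injection h)]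
  · intro p _ q _ hpq
    apply Finset.disjoint_left.2
    rintro L hL hL'
    simp only [Finset.mem_image] at hL hL'
    obtain ⟨A, _, rfl⟩ := hL
    obtain ⟨B, _, hB⟩ := hL'
    injection hB with h1 h2
    exact hpq (Subtype.ext h1.symm)

lemma mem_Facts : ∀ {n : ℕ}, 1 ≤ n → ∀ {L : List ℕ},
    (L ∈ Facts n ↔ (L.prod = n ∧ ∀ a ∈ L, 2 ≤ a)) := by
  intro n
  induction n using Nat.strong_induction_on with
  | _ n ih =>
    intro hn L
    rcases Nat.lt_or_ge n 2 with h2 | h2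
    · have : n = 1 := by omega
      subst this
      rw [Facts_one]
      constructor
      · intro hL
        simp only [Finset.mem_singleton] at hL
        subst hL
        simp
      · rintro ⟨h1, hge⟩
        cases L with
        | nil => simp
        | cons a A =>
          exfalso
          have ha : 2 ≤ a := hge a (by simp)
          have : 1 ≤ A.prod := by
            apply Nat.one_le_iff_ne_zero.2
            intro h0
            rw [List.prod_cons, h0, mul_zero] at h1
            omega
          rw [List.prod_cons] at h1
          nlinarith
    · rw [Facts_eq h2]
      constructor
      · intro hL
        simp only [Finset.mem_biUnion, Finset.mem_image] at hL
        obtain ⟨⟨d, hd⟩, _, A, hA, rfl⟩ := hL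
        simp only [Finset.mem_filter, Nat.mem_divisors] at hd
        obtain ⟨⟨hdvd, hn0⟩, hd2⟩ := hd
        have hdiv : 1 ≤ n / d := Nat.one_le_div_iff (by omega) |>.2 (Nat.le_of_dvd (by omega) hdvd)
        have hlt : n / d < n := Nat.div_lt_self (by omega) (by omega)
        rw [ih (n/d) hlt hdiv] at hA
        constructor
        · rw [List.prod_cons, hA.1, Nat.mul_div_cancel' hdvd]
        · intro a ha
          rcases List.mem_cons.1 ha with rfl | ha
          · exact hd2
          · exact hA.2 a ha
      · rintro ⟨hprod, hge⟩
        cases L with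
        | nil =>
          simp only [List.prod_nil] at hprod
          omega
        | cons d A =>
          have hd2 : 2 ≤ d := hge d (by simp)
          rw [List.prod_cons] at hprod
          have hdvd : d ∣ n := ⟨A.prod, hprod.symm⟩
          have hApos : 0 < A.prod := List.prod_pos (fun a ha => by have := hge a (by simp [ha]); omega)
          have hAprod : A.prod = n / d := by
            rw [← hprod, Nat.mul_div_cancel_left _ (by omega)]
          have hlt : n / d < n := Nat.div_lt_self (by omega) (by omega)
          have hdiv : 1 ≤ n / d := by rw [← hAprod]; omega
          simp only [Finset.mem_biUnion, Finset.mem_image]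
          refine ⟨⟨d, ?_⟩, Finset.mem_attach _ _, A, ?_, rfl⟩
          · simp only [Finset.mem_filter, Nat.mem_divisors]
            exact ⟨⟨hdvd, by omega⟩, hd2⟩
          · rw [ih (n/d) hlt hdiv]
            exact ⟨hAprod, fun a ha => hge a (by simp [ha])⟩

lemma Facts_ne_nil {n : ℕ} (h : 2 ≤ n) {L : List ℕ} (hL : L ∈ Facts n) : L ≠ [] := by
  rw [mem_Facts (by omega)] at hL
  intro h0
  rw [h0] at hL
  simp at hL
  omega

lemma log_prod_list : ∀ (L : List ℕ), (∀ a ∈ L, 1 ≤ a) →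
    Real.log (L.prod : ℕ) = (L.map (fun a : ℕ => Real.log a)).sum := by
  intro L
  induction L with
  | nil => simp
  | cons a A ih =>
    intro h
    have ha : 1 ≤ a := h a (by simp)
    have hA : 0 < A.prod := List.prod_pos (fun b hb => h b (by simp [hb]))
    rw [List.prod_cons, List.map_cons, List.sum_cons, ← ih (fun b hb => h b (by simp [hb])),
      Nat.cast_mul, Real.log_mul (Nat.cast_ne_zero.2 (by omega)) (Nat.cast_ne_zero.2 (by omega))]



noncomputable def cc (α : ℕ → Polynomial ℂ) (m : ℕ) : ℂ := ((α m).derivative).eval 0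

noncomputable def Pc (α : ℕ → Polynomial ℂ) (L : List ℕ) : ℂ := (L.map (cc α)).prod

variable {α : ℕ → Polynomial ℂ}

lemma poly_eq_of_deriv {p q : Polynomial ℂ} (h0 : p.eval 0 = q.eval 0)
    (hd : ∀ x, p.derivative.eval x = q.derivative.eval x) : p = q := by
  have hder : (p - q).derivative = 0 := by
    rw [derivative_sub, sub_eq_zero]
    exact Polynomial.funext hd
  have := Polynomial.eq_C_of_derivative_eq_zero hder
  rw [Polynomial.coeff_zero_eq_eval_zero] at this
  have h0' : (p - q).eval 0 = 0 := by simp [h0]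
  rw [h0'] at this
  simpa [sub_eq_zero] using this

lemma conv_poly (hα : IsDirichletConvPolyFamily α) (x : ℂ) {n : ℕ} (hn : 1 ≤ n) :
    (α n).comp (C x + X) = ∑ d ∈ n.divisors, C ((α d).eval x) * α (n / d) := by
  apply Polynomial.funext
  intro y
  rw [eval_comp]
  simp only [eval_add, eval_C, eval_X, eval_finset_sum, eval_mul]
  exact hα.2 n hn x y

lemma cc_one (hα : IsDirichletConvPolyFamily α) : cc α 1 = 0 := by
  unfold cc
  rw [hα.1]
  simp

lemma deriv_rel (hα : IsDirichletConvPolyFamily α) {n : ℕ} (hn : 1 ≤ n) (x : ℂ) :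
    (α n).derivative.eval x = ∑ d ∈ n.divisors, cc α (n / d) * (α d).eval x := by
  have h := conv_poly hα x hn
  have hder := congrArg Polynomial.derivative h
  have hder0 := congrArg (Polynomial.eval 0) hder
  have hL : Polynomial.eval 0 (Polynomial.derivative ((α n).comp (C x + X)))
      = (α n).derivative.eval x := by
    rw [Polynomial.derivative_comp]
    simp
  have hR : Polynomial.eval 0 (Polynomial.derivative
        (∑ d ∈ n.divisors, C ((α d).eval x) * α (n / d)))
      = ∑ d ∈ n.divisors, cc α (n / d) * (α d).eval x := by
    rw [derivative_sum, eval_finset_sum]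
    apply Finset.sum_congr rfl
    intro d _
    rw [derivative_mul, derivative_C]
    simp [cc]
    ring
  rw [hL, hR] at hder0
  exact hder0

lemma alpha_eval_zero (hα : IsDirichletConvPolyFamily α) : ∀ {n : ℕ}, 2 ≤ n →
    (α n).eval 0 = 0 := by
  intro n
  induction n using Nat.strong_induction_on with
  | _ n ih =>
    intro hn
    have h := hα.2 n (by omega) 0 0
    rw [add_zero] at h
    have h1mem : 1 ∈ n.divisors := Nat.one_mem_divisors.2 (by omega)
    have hnmem : n ∈ n.divisors.erase 1 :=
      Finset.mem_erase.2 ⟨by omega, Nat.mem_divisors_self n (by omega)⟩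
    rw [← Finset.add_sum_erase _ _ h1mem, ← Finset.add_sum_erase _ _ hnmem] at h
    have hmid : ∀ d ∈ (n.divisors.erase 1).erase n,
        (α d).eval 0 * (α (n / d)).eval 0 = 0 := by
      intro d hd
      have hd1 := Finset.mem_erase.1 hd
      have hd2 := Finset.mem_erase.1 hd1.2
      have hdvd : d ∣ n := (Nat.mem_divisors.1 hd2.2).1
      have hdle : d ≤ n := Nat.le_of_dvd (by omega) hdvd
      have : (α d).eval 0 = 0 := ih d (by omega) (by
        have : d ≠ 0 := by rintro rfl; exact absurd (Nat.eq_zero_of_zero_dvd hdvd) (by omega)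
        omega)
      rw [this, zero_mul]
    rw [Finset.sum_eq_zero hmid, add_zero, hα.1, Nat.div_one, Nat.div_self (by omega : 0 < n),
      hα.1] at h
    simp only [eval_one, one_mul, mul_one] at h
    -- h : (α n).eval 0 = (α n).eval 0 + (α n).eval 0
    linear_combination -h

lemma exp_formula (hα : IsDirichletConvPolyFamily α) : ∀ {n : ℕ}, 1 ≤ n → ∀ x : ℂ,
    (α n).eval x = ∑ L ∈ Facts n, x ^ L.length * Pc α L / (L.length.factorial : ℂ) := by
  intro n
  induction n using Nat.strong_induction_on with
  | _ n ih =>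
    intro hn x
    rcases Nat.lt_or_ge n 2 with h2 | h2
    · have : n = 1 := by omega
      subst this
      rw [Facts_one]
      simp [Pc, hα.1]
    · set Q : Polynomial ℂ := ∑ L ∈ Facts n, C (Pc α L / (L.length.factorial : ℂ)) * X ^ L.length with hQ
      have hQeval : ∀ z : ℂ, Q.eval z = ∑ L ∈ Facts n, z ^ L.length * Pc α L / (L.length.factorial : ℂ) := by
        intro z
        rw [hQ, eval_finset_sum]
        apply Finset.sum_congr rfl
        intro L _
        simp [eval_mul, eval_pow]
        ring
      have : α n = Q := by
        apply poly_eq_of_deriv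
        · rw [hQeval 0, alpha_eval_zero hα h2]
          symm
          apply Finset.sum_eq_zero
          intro L hL
          have := Facts_ne_nil h2 hL
          have hlen : L.length ≠ 0 := by simpa [List.length_eq_zero_iff] using this
          rw [zero_pow hlen, zero_mul, zero_div]
        · intro x
          -- LHS:
          rw [deriv_rel hα (by omega) x]
          -- reindex d ↦ n/d
          rw [show ∑ d ∈ n.divisors, cc α (n / d) * (α d).eval x
              = ∑ m ∈ n.divisors, cc α m * (α (n / m)).eval x by
            rw [← Nat.sum_div_divisors n (fun m => cc α m * (α (n / m)).eval x)]
            apply Finset.sum_congr rfl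
            intro d hd
            rw [Nat.div_div_self (Nat.mem_divisors.1 hd).1 (by omega)]]
          -- RHS:
          have hQd : Q.derivative.eval x
              = ∑ L ∈ Facts n, (L.length : ℂ) * x ^ (L.length - 1) * Pc α L / (L.length.factorial : ℂ) := by
            rw [hQ, derivative_sum, eval_finset_sum]
            apply Finset.sum_congr rfl
            intro L _
            rw [derivative_mul, derivative_C, zero_mul, zero_add, derivative_X_pow]
            simp [eval_mul, eval_pow]
            ring
          rw [hQd, sum_Facts h2]
          -- compute inner sums
          have hinner : ∀ d ∈ n.divisors.filter (fun d => 2 ≤ d),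
              (∑ A ∈ Facts (n / d), ((d :: A).length : ℂ) * x ^ ((d :: A).length - 1)
                * Pc α (d :: A) / ((d :: A).length.factorial : ℂ))
              = cc α d * (α (n / d)).eval x := by
            intro d hd
            simp only [Finset.mem_filter, Nat.mem_divisors] at hd
            have hnd1 : 1 ≤ n / d :=
              Nat.one_le_div_iff (by omega) |>.2 (Nat.le_of_dvd (by omega) hd.1.1)
            have hndlt : n / d < n := Nat.div_lt_self (by omega) (by omega)
            rw [ih (n/d) hndlt hnd1 x, Finset.mul_sum]
            apply Finset.sum_congr rfl
            intro A hA
            simp only [List.length_cons]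
            have hPc : Pc α (d :: A) = cc α d * Pc α A := by
              simp [Pc]
            rw [hPc]
            have hfac : ((A.length + 1).factorial : ℂ) = (A.length + 1) * (A.length.factorial : ℂ) := by
              rw [Nat.factorial_succ]
              push_cast
              ring
            rw [hfac]
            have h1 : ((A.length : ℂ) + 1) ≠ 0 := by
              have := Nat.cast_ne_zero (R := ℂ).2 (Nat.succ_ne_zero A.length)
              push_cast at this
              exact this
            have h2 : ((A.length.factorial : ℂ)) ≠ 0 :=
              Nat.cast_ne_zero.2 (Nat.factorial_ne_zero A.length)
            field_simp
            push_cast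
            ring
          rw [Finset.sum_congr rfl hinner]
          -- now compare full divisors sum with filtered sum
          have hfilter : ∑ d ∈ n.divisors.filter (fun d => 2 ≤ d), cc α d * (α (n / d)).eval x
              = ∑ m ∈ n.divisors, cc α m * (α (n / m)).eval x := by
            apply Finset.sum_filter_of_ne
            intro m hm hne
            by_contra hlt
            have hm1 : m = 1 := by
              have := Nat.pos_of_mem_divisors hm
              omega
            rw [hm1, cc_one hα, zero_mul] at hne
            exact hne rfl
          rw [hfilter]
      rw [this, hQeval]



/-! ### U and β basics -/

def U (x t : ℂ) : ℕ → ℂ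
  | 0 => 1
  | k+1 => x * (x + t) ^ k

@[simp] lemma U_zero (x t : ℂ) : U x t 0 = 1 := rfl
@[simp] lemma U_succ (x t : ℂ) (k : ℕ) : U x t (k+1) = x * (x + t) ^ k := rfl

noncomputable def slog (w : ℂ) (d : ℕ) : ℂ := w * (Real.log d : ℂ)

@[simp] lemma slog_one (w : ℂ) : slog w 1 = 0 := by simp [slog]

lemma slog_mul (w : ℂ) {d e : ℕ} (hd : 1 ≤ d) (he : 1 ≤ e) :
    slog w (d * e) = slog w d + slog w e := by
  unfold slog
  push_cast
  rw [Real.log_mul (by exact_mod_cast (by omega : d ≠ 0)) (by exact_mod_cast (by omega : e ≠ 0))]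
  push_cast
  ring

lemma slog_div (w : ℂ) {d n : ℕ} (hd : d ∣ n) (hd1 : 1 ≤ d) (hn : 1 ≤ n) :
    slog w (n / d) = slog w n - slog w d := by
  obtain ⟨e, rfl⟩ := hd
  have he : 1 ≤ e := by
    rcases Nat.eq_zero_or_pos e with rfl | h
    · simp at hn
    · exact h
  rw [Nat.mul_div_cancel_left _ (by omega), slog_mul w hd1 he]
  ring

section Beta

variable {α : ℕ → Polynomial ℂ} {αhat : ℕ → Polynomial ℂ} {β : ℕ → Polynomial ℂ} {w : ℂ}

lemma key_rel (hα : IsDirichletConvPolyFamily α)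
    (hhat : ∀ n : ℕ, 2 ≤ n → Polynomial.X * αhat n = α n)
    (hβ1 : β 1 = 1)
    (hβ : ∀ n : ℕ, 2 ≤ n → β n = Polynomial.X *
      (αhat n).comp (Polynomial.X + Polynomial.C (w * (Real.log n : ℂ))))
    {d : ℕ} (hd : 1 ≤ d) (x : ℂ) :
    x * (α d).eval (x + slog w d) = (x + slog w d) * (β d).eval x := by
  rcases Nat.lt_or_ge d 2 with h2 | h2
  · have : d = 1 := by omega
    subst this
    rw [hα.1, hβ1]
    simp
  · have h1 := congrArg (Polynomial.eval (x + slog w d)) (hhat d h2)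
    rw [eval_mul, eval_X] at h1
    have h2' := congrArg (Polynomial.eval x) (hβ d h2)
    rw [eval_mul, eval_X, eval_comp, eval_add, eval_X, eval_C] at h2'
    rw [← h1, h2']
    unfold slog
    ring

lemma beta_formula (hα : IsDirichletConvPolyFamily α)
    (hhat : ∀ n : ℕ, 2 ≤ n → Polynomial.X * αhat n = α n)
    (hβ1 : β 1 = 1)
    (hβ : ∀ n : ℕ, 2 ≤ n → β n = Polynomial.X *
      (αhat n).comp (Polynomial.X + Polynomial.C (w * (Real.log n : ℂ))))
    {d : ℕ} (hd : 1 ≤ d) (x : ℂ) :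
    (β d).eval x = ∑ A ∈ Facts d, U x (slog w d) A.length * Pc α A / (A.length.factorial : ℂ) := by
  rcases Nat.lt_or_ge d 2 with h2 | h2
  · have : d = 1 := by omega
    subst this
    rw [Facts_one, hβ1]
    simp [Pc]
  · set t := slog w d with ht
    have heq : (fun x : ℂ => (β d).eval x) = (fun x : ℂ =>
        ∑ A ∈ Facts d, U x t A.length * Pc α A / (A.length.factorial : ℂ)) := by
      apply Continuous.ext_on (dense_compl_singleton (-t))
      · exact (β d).continuous_aeval
      · apply continuous_finset_sum
        intro A hA
        have hlen : A.length ≠ 0 := by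
          simpa [List.length_eq_zero_iff] using Facts_ne_nil h2 hA
        obtain ⟨k, hk⟩ : ∃ k, A.length = k + 1 := ⟨A.length - 1, by omega⟩
        rw [hk]
        simp only [U_succ]
        fun_prop
      · intro z hz
        have hz' : z + t ≠ 0 := by
          simp only [Set.mem_compl_iff, Set.mem_singleton_iff] at hz
          intro h
          apply hz
          linear_combination h
        apply mul_left_cancel₀ hz'
        rw [show (z + t) * ((β d).eval z) = z * (α d).eval (z + t) from
          (key_rel hα hhat hβ1 hβ (by omega) z).symm]
        rw [exp_formula hα (by omega) (z + t), Finset.mul_sum, Finset.mul_sum]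
        apply Finset.sum_congr rfl
        intro A hA
        have hlen : A.length ≠ 0 := by
          simpa [List.length_eq_zero_iff] using Facts_ne_nil h2 hA
        obtain ⟨k, hk⟩ : ∃ k, A.length = k + 1 := ⟨A.length - 1, by omega⟩
        rw [hk]
        simp only [U_succ, pow_succ]
        ring
    exact congrFun heq x

end Beta

/-! ### Alternating sum lemma -/

lemma alt_sum : ∀ (ts : List ℂ) (g : Polynomial ℂ), g.degree < (ts.length : ℕ) →
    ∑ m ∈ masks ts.length, (-1 : ℂ) ^ (m.count false) * g.eval ((selT m ts).sum) = 0 := by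
  intro ts
  induction ts with
  | nil =>
    intro g hg
    have : g = 0 := by
      rw [← Polynomial.degree_eq_bot]
      exact Nat.WithBot.lt_zero_iff.1 (by exact_mod_cast hg)
    subst this
    simp [masks]
  | cons t ts ih =>
    intro g hg
    rw [List.length_cons, sum_masks_succ]
    have e1 : ∀ m : List Bool, (-1 : ℂ) ^ ((true :: m).count false) *
        g.eval ((selT (true :: m) (t :: ts)).sum)
        = (-1 : ℂ) ^ (m.count false) * g.eval (t + (selT m ts).sum) := by
      intro m
      simp [List.count_cons]
    have e2 : ∀ m : List Bool, (-1 : ℂ) ^ ((false :: m).count false) *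
        g.eval ((selT (false :: m) (t :: ts)).sum)
        = -((-1 : ℂ) ^ (m.count false) * g.eval ((selT m ts).sum)) := by
      intro m
      simp only [selT_cons_false, List.count_cons_self, pow_succ]
      ring
    rw [Finset.sum_congr rfl (fun m _ => e1 m), Finset.sum_congr rfl (fun m _ => e2 m),
      Finset.sum_neg_distrib, ← sub_eq_add_neg, ← Finset.sum_sub_distrib]
    set g' : Polynomial ℂ := g.comp (Polynomial.X + Polynomial.C t) - g with hg'
    have e3 : ∀ m : List Bool, (-1:ℂ)^(m.count false) * g.eval (t + (selT m ts).sum)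
        - (-1:ℂ)^(m.count false) * g.eval ((selT m ts).sum)
        = (-1:ℂ)^(m.count false) * g'.eval ((selT m ts).sum) := by
      intro m
      rw [hg', eval_sub, eval_comp]
      simp only [eval_add, eval_X, eval_C]
      rw [add_comm ((selT m ts).sum) t]
      ring
    rw [Finset.sum_congr rfl (fun m _ => e3 m)]
    by_cases hg0 : g' = 0
    · rw [hg0]
      simp
    · apply ih
      have hgne : g ≠ 0 := by
        rintro rfl
        simp [hg'] at hg0
      have hnd : (g.comp (Polynomial.X + Polynomial.C t)).natDegree = g.natDegree := by
        rw [Polynomial.natDegree_comp, Polynomial.natDegree_X_add_C, mul_one]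
      have hlc : (g.comp (Polynomial.X + Polynomial.C t)).leadingCoeff = g.leadingCoeff := by
        rw [Polynomial.leadingCoeff_comp (by rw [Polynomial.natDegree_X_add_C]; omega)]
        rw [Polynomial.leadingCoeff_X_add_C, one_pow, mul_one]
      have hcompne : g.comp (Polynomial.X + Polynomial.C t) ≠ 0 := by
        intro h
        apply hgne
        rw [← Polynomial.leadingCoeff_eq_zero, ← hlc, h, Polynomial.leadingCoeff_zero]
      have hdeg : (g.comp (Polynomial.X + Polynomial.C t)).degree = g.degree := by
        rw [Polynomial.degree_eq_natDegree hcompne, Polynomial.degree_eq_natDegree hgne, hnd]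
      have hlt : g'.degree < g.degree := by
        rw [hg', ← hdeg]
        exact Polynomial.degree_sub_lt hdeg hcompne hlc
      have hle : g.degree ≤ (ts.length : ℕ) := by
        rw [Polynomial.degree_eq_natDegree hgne] at hg ⊢
        rw [List.length_cons] at hg
        exact_mod_cast Nat.lt_succ_iff.1 (by exact_mod_cast hg)
      exact lt_of_lt_of_le hlt hle



lemma mem_selT {γ : Type*} : ∀ {m : List Bool} {L : List γ} {x : γ}, x ∈ selT m L → x ∈ L
  | [], L, x, h => by simp [selT] at h
  | b :: m, [], x, h => by cases b <;> simp [selT] at h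
  | true :: m, a :: L, x, h => by
      rcases List.mem_cons.1 h with h | h
      · exact List.mem_cons.2 (Or.inl h)
      · exact List.mem_cons.2 (Or.inr (mem_selT h))
  | false :: m, a :: L, x, h => List.mem_cons.2 (Or.inr (mem_selT h))

lemma mem_selF {γ : Type*} : ∀ {m : List Bool} {L : List γ} {x : γ}, x ∈ selF m L → x ∈ L
  | [], L, x, h => by simp [selF] at h
  | b :: m, [], x, h => by cases b <;> simp [selF] at h
  | false :: m, a :: L, x, h => by
      rcases List.mem_cons.1 h with h | h
      · exact List.mem_cons.2 (Or.inl h)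
      · exact List.mem_cons.2 (Or.inr (mem_selF h))
  | true :: m, a :: L, x, h => List.mem_cons.2 (Or.inr (mem_selF h))

lemma reindex {n : ℕ} (hn : 1 ≤ n) (F : List ℕ → List ℕ → ℂ) :
    ∑ d ∈ n.divisors, ∑ A ∈ Facts d, ∑ B ∈ Facts (n / d),
      F A B / ((A.length.factorial : ℂ) * (B.length.factorial : ℂ))
    = ∑ L ∈ Facts n, (∑ m ∈ masks L.length, F (selT m L) (selF m L))
        / (L.length.factorial : ℂ) := by
  classical
  have hRHS : (∑ L ∈ Facts n, (∑ m ∈ masks L.length, F (selT m L) (selF m L))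
        / (L.length.factorial : ℂ))
      = ∑ q ∈ (Facts n).sigma (fun L => masks L.length),
          F (selT q.2 q.1) (selF q.2 q.1) / (q.1.length.factorial : ℂ) := by
    rw [Finset.sum_sigma]
    apply Finset.sum_congr rfl
    intro L _
    rw [Finset.sum_div]
  have hLHS : (∑ d ∈ n.divisors, ∑ A ∈ Facts d, ∑ B ∈ Facts (n / d),
        F A B / ((A.length.factorial : ℂ) * (B.length.factorial : ℂ)))
      = ∑ p ∈ n.divisors.sigma (fun d => Facts d ×ˢ Facts (n / d)),
          F p.2.1 p.2.2 / ((p.2.1.length.factorial : ℂ) * (p.2.2.length.factorial : ℂ)) := by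
    rw [Finset.sum_sigma]
    apply Finset.sum_congr rfl
    intro d _
    rw [Finset.sum_product]
  rw [hRHS, hLHS]
  set π : (Σ _ : List ℕ, List Bool) → (Σ _ : ℕ, List ℕ × List ℕ) :=
    fun q => ⟨(selT q.2 q.1).prod, (selT q.2 q.1, selF q.2 q.1)⟩ with hπ
  have hmaps : ∀ q ∈ (Facts n).sigma (fun L => masks L.length),
      π q ∈ n.divisors.sigma (fun d => Facts d ×ˢ Facts (n / d)) := by
    rintro ⟨L, m⟩ hq
    rw [Finset.mem_sigma] at hq
    obtain ⟨hL, hm⟩ := hq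
    have hmlen : m.length = L.length := mem_masks.1 hm
    obtain ⟨hLprod, hLge⟩ := (mem_Facts hn).1 hL
    have hge2T : ∀ a ∈ selT m L, 2 ≤ a := fun a ha => hLge a (mem_selT ha)
    have hge2F : ∀ a ∈ selF m L, 2 ≤ a := fun a ha => hLge a (mem_selF ha)
    have hposT : 0 < (selT m L).prod := List.prod_pos (fun a ha => by have := hge2T a ha; omega)
    have hposF : 0 < (selF m L).prod := List.prod_pos (fun a ha => by have := hge2F a ha; omega)
    have hprod : (selT m L).prod * (selF m L).prod = n := by
      rw [prod_selT_selF hmlen, hLprod]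
    simp only [hπ, Finset.mem_sigma]
    constructor
    · rw [Nat.mem_divisors]
      exact ⟨⟨(selF m L).prod, hprod.symm⟩, by omega⟩
    · rw [Finset.mem_product]
      constructor
      · exact (mem_Facts hposT).2 ⟨rfl, hge2T⟩
      · have hq : (selF m L).prod = n / (selT m L).prod := by
          rw [← hprod, Nat.mul_div_cancel_left _ hposT]
        exact (mem_Facts (by rw [← hq]; omega)).2 ⟨hq, hge2F⟩
  rw [← Finset.sum_fiberwise_of_maps_to hmaps
      (fun q => F (selT q.2 q.1) (selF q.2 q.1) / (q.1.length.factorial : ℂ))]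
  apply Finset.sum_congr rfl
  rintro ⟨d, A, B⟩ hp
  rw [Finset.mem_sigma, Finset.mem_product] at hp
  obtain ⟨hd, hA, hB⟩ := hp
  simp only at hd hA hB
  have hdpos : 0 < d := Nat.pos_of_mem_divisors hd
  have hdvd : d ∣ n := (Nat.mem_divisors.1 hd).1
  have hndpos : 0 < n / d := Nat.div_pos (Nat.le_of_dvd (by omega) hdvd) hdpos
  obtain ⟨hAprod, hAge⟩ := (mem_Facts hdpos).1 hA
  obtain ⟨hBprod, hBge⟩ := (mem_Facts hndpos).1 hB
  set i := A.length
  set j := B.length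
  have hfiber : ((Facts n).sigma (fun L => masks L.length)).filter
        (fun q => π q = (⟨d, (A, B)⟩ : Σ _ : ℕ, List ℕ × List ℕ))
      = ((masks (i + j)).filter (fun m => m.count true = i)).image
          (fun m => (⟨merge m A B, m⟩ : Σ _ : List ℕ, List Bool)) := by
    ext q
    constructor
    · intro hq
      rw [Finset.mem_filter] at hq
      obtain ⟨hqdom, hqπ⟩ := hq
      obtain ⟨L, m⟩ := q
      rw [Finset.mem_sigma] at hqdom
      obtain ⟨hL, hm⟩ := hqdom
      have hmlen : m.length = L.length := mem_masks.1 hm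
      simp only [hπ] at hqπ
      rw [Sigma.ext_iff] at hqπ
      have hpair : (selT m L, selF m L) = (A, B) := eq_of_heq hqπ.2
      have h1 : (selT m L) = A ∧ (selF m L) = B :=
        ⟨congrArg Prod.fst hpair, congrArg Prod.snd hpair⟩
      have hcT : m.count true = i := by
        rw [show i = A.length from rfl, ← h1.1, ← length_selT hmlen]
      have hcF : m.count false = j := by
        rw [show j = B.length from rfl, ← h1.2, ← length_selF hmlen]
      have hmlen2 : m.length = i + j := by
        rw [← count_true_add_count_false m, hcT, hcF]
      rw [Finset.mem_image]
      refine ⟨m, Finset.mem_filter.2 ⟨mem_masks.2 hmlen2, hcT⟩, ?_⟩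
      have : merge m A B = L := by
        rw [← h1.1, ← h1.2, merge_selT_selF hmlen]
      rw [this]
    · intro hq
      rw [Finset.mem_image] at hq
      obtain ⟨m, hm, rfl⟩ := hq
      rw [Finset.mem_filter] at hm
      obtain ⟨hmk, hcT⟩ := hm
      have hmlen : m.length = i + j := mem_masks.1 hmk
      have hcF : m.count false = j := by
        have := count_true_add_count_false m
        omega
      obtain ⟨hsT, hsF, hlen⟩ := selT_merge (hcT.trans rfl) (hcF.trans rfl)
      have hLprod : (merge m A B).prod = n := by
        rw [prod_merge (hcT.trans rfl) (hcF.trans rfl), hAprod, hBprod,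
          Nat.mul_div_cancel' hdvd]
      have hLmem : merge m A B ∈ Facts n := by
        apply (mem_Facts hn).2
        refine ⟨hLprod, ?_⟩
        intro a ha
        rcases mem_merge ha with h | h
        · exact hAge a h
        · exact hBge a h
      rw [Finset.mem_filter, Finset.mem_sigma]
      refine ⟨⟨hLmem, mem_masks.2 (by rw [hlen])⟩, ?_⟩
      simp only [hπ]
      rw [hsT, hsF, hAprod]
  rw [hfiber, Finset.sum_image (by
    intro m1 _ m2 _ h
    have := congrArg (fun r : (Σ _ : List ℕ, List Bool) => r.2) h
    exact this)]
  have hval : ∀ m ∈ (masks (i + j)).filter (fun m => m.count true = i),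
      F (selT m (merge m A B)) (selF m (merge m A B))
        / (((merge m A B).length.factorial : ℂ))
      = F A B / (((i + j).factorial : ℂ)) := by
    intro m hm
    rw [Finset.mem_filter] at hm
    obtain ⟨hmk, hcT⟩ := hm
    have hmlen : m.length = i + j := mem_masks.1 hmk
    have hcF : m.count false = j := by
      have := count_true_add_count_false m
      omega
    obtain ⟨hsT, hsF, hlen⟩ := selT_merge (hcT.trans rfl) (hcF.trans rfl)
    rw [hsT, hsF, hlen, hmlen]
  rw [Finset.sum_congr rfl hval, Finset.sum_const, card_masks_filter, nsmul_eq_mul]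
  have hkey : ((i + j).choose i * i.factorial * j.factorial : ℕ) = (i + j).factorial := by
    have h := Nat.choose_mul_factorial_mul_factorial (Nat.le_add_right i j)
    rwa [Nat.add_sub_cancel_left] at h
  have hfac1 : (i.factorial : ℂ) ≠ 0 := Nat.cast_ne_zero.2 (Nat.factorial_ne_zero i)
  have hfac2 : (j.factorial : ℂ) ≠ 0 := Nat.cast_ne_zero.2 (Nat.factorial_ne_zero j)
  have hfac3 : (((i+j).factorial : ℕ) : ℂ) ≠ 0 := Nat.cast_ne_zero.2 (Nat.factorial_ne_zero _)
  have hkeyC : (((i+j).factorial : ℕ) : ℂ)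
      = (((i + j).choose i : ℕ) : ℂ) * (i.factorial : ℂ) * (j.factorial : ℂ) := by
    exact_mod_cast hkey.symm
  have hC : (((i + j).choose i : ℕ) : ℂ) ≠ 0 :=
    Nat.cast_ne_zero.2 (Nat.choose_pos (Nat.le_add_right i j)).ne'
  rw [hkeyC]
  field_simp



noncomputable def lsum (w : ℂ) (A : List ℕ) : ℂ :=
  (A.map (fun a : ℕ => w * (Real.log a : ℂ))).sum

lemma map_mul_log_sum (w : ℂ) (A : List ℕ) :
    (A.map (fun a : ℕ => w * (Real.log a : ℂ))).sum
      = w * (((A.map (fun a : ℕ => Real.log a)).sum : ℝ) : ℂ) := by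
  induction A with
  | nil => simp
  | cons a A ih =>
    simp only [List.map_cons, List.sum_cons, ih]
    push_cast
    ring

lemma lsum_eq_slog {w : ℂ} {A : List ℕ} {d : ℕ} (hd : 1 ≤ d) (hA : A ∈ Facts d) :
    lsum w A = slog w d := by
  obtain ⟨hprod, hge⟩ := (mem_Facts hd).1 hA
  unfold lsum slog
  rw [map_mul_log_sum, ← hprod, log_prod_list A (fun a ha => by have := hge a ha; omega)]

section VZero

variable {α : ℕ → Polynomial ℂ} {αhat : ℕ → Polynomial ℂ} {β : ℕ → Polynomial ℂ} {w : ℂ}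

lemma V_zero (hα : IsDirichletConvPolyFamily α)
    (hhat : ∀ n : ℕ, 2 ≤ n → Polynomial.X * αhat n = α n)
    (hβ1 : β 1 = 1)
    (hβ : ∀ n : ℕ, 2 ≤ n → β n = Polynomial.X *
      (αhat n).comp (Polynomial.X + Polynomial.C (w * (Real.log n : ℂ))))
    {n : ℕ} (hn : 2 ≤ n) (x : ℂ) :
    ∑ d ∈ n.divisors, (β d).eval x * (α (n / d)).eval (-x - slog w d) = 0 := by
  classical
  set F : List ℕ → List ℕ → ℂ := fun A B =>
    (U x (lsum w A) A.length * Pc α A) * ((-x - lsum w A) ^ B.length * Pc α B) with hF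
  have step1 : ∑ d ∈ n.divisors, (β d).eval x * (α (n / d)).eval (-x - slog w d)
      = ∑ d ∈ n.divisors, ∑ A ∈ Facts d, ∑ B ∈ Facts (n / d),
          F A B / ((A.length.factorial : ℂ) * (B.length.factorial : ℂ)) := by
    apply Finset.sum_congr rfl
    intro d hd
    have hdpos : 1 ≤ d := Nat.pos_of_mem_divisors hd
    have hdvd : d ∣ n := (Nat.mem_divisors.1 hd).1
    have hndpos : 1 ≤ n / d := Nat.div_pos (Nat.le_of_dvd (by omega) hdvd) hdpos
    rw [beta_formula hα hhat hβ1 hβ hdpos x, exp_formula hα hndpos (-x - slog w d),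
      Finset.sum_mul_sum]
    apply Finset.sum_congr rfl
    intro A hA
    apply Finset.sum_congr rfl
    intro B hB
    rw [hF]
    simp only
    rw [lsum_eq_slog hdpos hA, div_mul_div_comm]
  rw [step1, reindex (by omega) F]
  apply Finset.sum_eq_zero
  intro L hL
  have hLlen : L.length ≠ 0 := by
    simpa [List.length_eq_zero_iff] using Facts_ne_nil hn hL
  set ts : List ℂ := L.map (fun a : ℕ => w * (Real.log a : ℂ)) with hts
  set g : Polynomial ℂ := (Polynomial.C x + Polynomial.X) ^ (L.length - 1) with hg
  have hterm : ∀ m ∈ masks L.length, F (selT m L) (selF m L)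
      = (x * Pc α L) * ((-1 : ℂ) ^ (m.count false) * g.eval ((selT m ts).sum)) := by
    intro m hm
    have hmlen : m.length = L.length := mem_masks.1 hm
    have hTlen : (selT m L).length = m.count true := length_selT hmlen
    have hFlen : (selF m L).length = m.count false := length_selF hmlen
    have hcnt : m.count true + m.count false = L.length := by
      rw [count_true_add_count_false m, hmlen]
    have hlsum : lsum w (selT m L) = (selT m ts).sum := by
      rw [hts, lsum, ← selT_map]
    have hPc : Pc α (selT m L) * Pc α (selF m L) = Pc α L := by
      unfold Pc
      rw [← selT_map, ← selF_map]
      exact prod_selT_selF (by rw [List.length_map, hmlen])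
    have hgeval : g.eval ((selT m ts).sum) = (x + (selT m ts).sum) ^ (L.length - 1) := by
      rw [hg]
      simp
    rw [hF]
    simp only
    rw [hlsum, hTlen, hFlen, hgeval]
    rcases Nat.eq_zero_or_pos (m.count true) with hct | hct
    · -- selT m L is empty, sum = 0
      have hTnil : selT m L = [] := by
        rw [← List.length_eq_zero_iff, hTlen, hct]
      have htsnil : selT m ts = [] := by
        rw [hts, selT_map, hTnil]
        simp
      rw [hct, htsnil]
      simp only [U_zero, List.sum_nil, add_zero]
      have hcf : m.count false = L.length := by omega
      have hPc' : Pc α (selF m L) = Pc α L := by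
        rw [← hPc, hTnil]
        simp [Pc]
      rw [hPc', hcf]
      have hx : (-x - 0) ^ L.length = (-1:ℂ)^L.length * x ^ L.length := by
        rw [sub_zero]
        rw [show (-x) = (-1 : ℂ) * x by ring, mul_pow]
      rw [hx]
      have : x ^ L.length = x * x ^ (L.length - 1) := by
        conv_lhs => rw [show L.length = 1 + (L.length - 1) by omega]
        rw [pow_add, pow_one]
      rw [this, hTnil]
      simp only [Pc, List.map_nil, List.prod_nil, one_mul]
      ring
    · obtain ⟨k, hk⟩ : ∃ k, m.count true = k + 1 := ⟨m.count true - 1, by omega⟩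
      rw [hk, U_succ]
      set t := (selT m ts).sum
      have hpow : (-x - t) ^ (m.count false) = (-1:ℂ)^(m.count false) * (x + t)^(m.count false) := by
        rw [show (-x - t) = (-1 : ℂ) * (x + t) by ring, mul_pow]
      rw [hpow]
      have hexp : k + m.count false = L.length - 1 := by omega
      rw [← hPc, ← hexp, pow_add]
      ring
  rw [Finset.sum_congr rfl hterm, ← Finset.mul_sum]
  have halt : ∑ m ∈ masks L.length, (-1 : ℂ) ^ (m.count false) * g.eval ((selT m ts).sum) = 0 := by
    have htslen : ts.length = L.length := by rw [hts, List.length_map]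
    rw [← htslen]
    apply alt_sum
    rw [htslen]
    have hdeg1 : (Polynomial.C x + Polynomial.X).degree = 1 := by
      rw [add_comm, Polynomial.degree_X_add_C]
    have h1 : g.degree ≤ ((L.length - 1 : ℕ) : WithBot ℕ) := by
      rw [hg]
      refine le_trans (Polynomial.degree_pow_le _ _) ?_
      rw [hdeg1]
      simp
    apply lt_of_le_of_lt h1
    exact_mod_cast Nat.sub_lt (by omega) (by omega)
  rw [halt, mul_zero, zero_div]

end VZero



lemma poly_eq_of_deriv' {p q : Polynomial ℂ} (z0 : ℂ) (h0 : p.eval z0 = q.eval z0)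
    (hd : ∀ x, p.derivative.eval x = q.derivative.eval x) : p = q := by
  have hder : (p - q).derivative = 0 := by
    rw [derivative_sub, sub_eq_zero]
    exact Polynomial.funext hd
  have hc := Polynomial.eq_C_of_derivative_eq_zero hder
  have h1 : (p - q).eval z0 = 0 := by simp [h0]
  rw [hc, eval_C] at h1
  have hz : p - q = 0 := by rw [hc, h1, map_zero]
  exact sub_eq_zero.1 hz

section H1

variable {α : ℕ → Polynomial ℂ} {αhat : ℕ → Polynomial ℂ} {β : ℕ → Polynomial ℂ} {w : ℂ}

lemma H1 (hα : IsDirichletConvPolyFamily α)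
    (hhat : ∀ n : ℕ, 2 ≤ n → Polynomial.X * αhat n = α n)
    (hβ1 : β 1 = 1)
    (hβ : ∀ n : ℕ, 2 ≤ n → β n = Polynomial.X *
      (αhat n).comp (Polynomial.X + Polynomial.C (w * (Real.log n : ℂ)))) :
    ∀ {n : ℕ}, 1 ≤ n → ∀ x y : ℂ,
      ∑ d ∈ n.divisors, (β d).eval x * (α (n / d)).eval (y + slog w (n / d))
        = (α n).eval (x + y + slog w n) := by
  intro n
  induction n using Nat.strong_induction_on with
  | _ n ih =>
    intro hn x y
    rcases Nat.lt_or_ge n 2 with h2 | h2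
    · have hn1 : n = 1 := by omega
      subst hn1
      rw [Nat.divisors_one]
      simp [hβ1, hα.1]
    · set P : Polynomial ℂ := ∑ d ∈ n.divisors, Polynomial.C ((β d).eval x) *
        ((α (n / d)).comp (Polynomial.X + Polynomial.C (slog w (n / d)))) with hP
      set Q : Polynomial ℂ := (α n).comp (Polynomial.X + Polynomial.C (x + slog w n)) with hQ
      have hPeval : ∀ z : ℂ, P.eval z
          = ∑ d ∈ n.divisors, (β d).eval x * (α (n / d)).eval (z + slog w (n / d)) := by
        intro z
        rw [hP, eval_finset_sum]
        apply Finset.sum_congr rfl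
        intro d _
        simp [eval_comp]
      have hQeval : ∀ z : ℂ, Q.eval z = (α n).eval (x + z + slog w n) := by
        intro z
        rw [hQ, eval_comp]
        simp only [eval_add, eval_X, eval_C]
        rw [show z + (x + slog w n) = x + z + slog w n by ring]
      have hPQ : P = Q := by
        apply poly_eq_of_deriv' (-x - slog w n)
        · -- base point
          rw [hPeval, hQeval]
          rw [show x + (-x - slog w n) + slog w n = 0 by ring, alpha_eval_zero hα h2]
          rw [← V_zero hα hhat hβ1 hβ h2 x]
          apply Finset.sum_congr rfl
          intro d hd
          have hdpos : 1 ≤ d := Nat.pos_of_mem_divisors hd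
          have hdvd : d ∣ n := (Nat.mem_divisors.1 hd).1
          rw [slog_div w hdvd hdpos (by omega)]
          rw [show -x - slog w n + (slog w n - slog w d) = -x - slog w d by ring]
        · -- derivatives
          intro z
          have hPd : P.derivative.eval z = ∑ d ∈ n.divisors,
              (β d).eval x * ((α (n / d)).derivative.eval (z + slog w (n / d))) := by
            rw [hP, derivative_sum, eval_finset_sum]
            apply Finset.sum_congr rfl
            intro d _
            rw [derivative_mul, derivative_C, zero_mul, zero_add, Polynomial.derivative_comp]
            simp [eval_comp]
          have hQd : Q.derivative.eval z = (α n).derivative.eval (x + z + slog w n) := by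
            rw [hQ, Polynomial.derivative_comp]
            simp only [derivative_add, derivative_X, derivative_C, add_zero, one_mul, eval_mul,
              eval_comp, eval_add, eval_X, eval_C]
            rw [show z + (x + slog w n) = x + z + slog w n by ring]
          rw [hPd, hQd]
          -- expand via deriv_rel
          have step1 : ∀ d ∈ n.divisors,
              (β d).eval x * ((α (n / d)).derivative.eval (z + slog w (n / d)))
              = (β d).eval x * ∑ q ∈ (n / d).divisorsAntidiagonal,
                  cc α q.2 * (α q.1).eval (z + slog w (n / d)) := by
            intro d hd
            have hdpos : 1 ≤ d := Nat.pos_of_mem_divisors hd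
            have hdvd : d ∣ n := (Nat.mem_divisors.1 hd).1
            have hnd : 1 ≤ n / d := Nat.div_pos (Nat.le_of_dvd (by omega) hdvd) hdpos
            rw [deriv_rel hα hnd]
            congr 1
            rw [← Nat.sum_divisorsAntidiagonal
              (fun e m => cc α m * (α e).eval (z + slog w (n / d)))]
          rw [Finset.sum_congr rfl step1]
          -- to antidiagonal, then sigma
          rw [← Nat.sum_divisorsAntidiagonal (fun d u => (β d).eval x *
            ∑ q ∈ u.divisorsAntidiagonal, cc α q.2 * (α q.1).eval (z + slog w u))]
          rw [show (∑ p ∈ n.divisorsAntidiagonal, (β p.1).eval x *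
              ∑ q ∈ p.2.divisorsAntidiagonal, cc α q.2 * (α q.1).eval (z + slog w p.2))
            = ∑ r ∈ n.divisorsAntidiagonal.sigma (fun p => p.2.divisorsAntidiagonal),
                (β r.1.1).eval x * (cc α r.2.2 * (α r.2.1).eval (z + slog w r.1.2)) by
            rw [Finset.sum_sigma]
            apply Finset.sum_congr rfl
            intro p _
            rw [Finset.mul_sum]]
          -- the key reindexing
          have hbij : (∑ r ∈ n.divisorsAntidiagonal.sigma (fun p => p.2.divisorsAntidiagonal),
                (β r.1.1).eval x * (cc α r.2.2 * (α r.2.1).eval (z + slog w r.1.2)))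
              = ∑ r ∈ n.divisorsAntidiagonal.sigma (fun p => p.2.divisorsAntidiagonal),
                cc α r.1.1 * ((β r.2.1).eval x
                  * (α r.2.2).eval (z + slog w r.1.1 + slog w r.2.2)) := by
            apply Finset.sum_nbij'
              (i := fun (r : Σ _ : ℕ × ℕ, ℕ × ℕ) =>
                (⟨(r.2.2, r.1.1 * r.2.1), (r.1.1, r.2.1)⟩ : Σ _ : ℕ × ℕ, ℕ × ℕ))
              (j := fun (r : Σ _ : ℕ × ℕ, ℕ × ℕ) =>
                (⟨(r.2.1, r.2.2 * r.1.1), (r.2.2, r.1.1)⟩ : Σ _ : ℕ × ℕ, ℕ × ℕ))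
            · rintro ⟨⟨d, u⟩, ⟨e, m⟩⟩ hr
              simp only [Finset.mem_sigma, Nat.mem_divisorsAntidiagonal] at hr
              obtain ⟨⟨hdu, hn0⟩, ⟨hem, hu0⟩⟩ := hr
              have hd0 : d ≠ 0 := by rintro rfl; rw [zero_mul] at hdu; exact hn0 hdu.symm
              have he0 : e ≠ 0 := by rintro rfl; rw [zero_mul] at hem; exact hu0 hem.symm
              simp only [Finset.mem_sigma, Nat.mem_divisorsAntidiagonal]
              refine ⟨⟨?_, hn0⟩, trivial, Nat.mul_ne_zero hd0 he0⟩
              rw [show m * (d * e) = d * (e * m) by ring, hem, hdu]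
            · rintro ⟨⟨m, v⟩, ⟨d, e⟩⟩ hr
              simp only [Finset.mem_sigma, Nat.mem_divisorsAntidiagonal] at hr
              obtain ⟨⟨hmv, hn0⟩, ⟨hde, hv0⟩⟩ := hr
              have hm0 : m ≠ 0 := by rintro rfl; rw [zero_mul] at hmv; exact hn0 hmv.symm
              have he0 : e ≠ 0 := by
                rintro rfl; rw [mul_zero] at hde; exact hv0 hde.symm
              simp only [Finset.mem_sigma, Nat.mem_divisorsAntidiagonal]
              refine ⟨⟨?_, hn0⟩, trivial, Nat.mul_ne_zero he0 hm0⟩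
              rw [show d * (e * m) = m * (d * e) by ring, hde, hmv]
            · rintro ⟨⟨d, u⟩, ⟨e, m⟩⟩ hr
              simp only [Finset.mem_sigma, Nat.mem_divisorsAntidiagonal] at hr
              obtain ⟨⟨hdu, hn0⟩, ⟨hem, hu0⟩⟩ := hr
              simp only
              rw [Sigma.ext_iff]
              refine ⟨?_, HEq.rfl⟩
              rw [Prod.mk.injEq]
              exact ⟨rfl, hem⟩
            · rintro ⟨⟨m, v⟩, ⟨d, e⟩⟩ hr
              simp only [Finset.mem_sigma, Nat.mem_divisorsAntidiagonal] at hr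
              obtain ⟨⟨hmv, hn0⟩, ⟨hde, hv0⟩⟩ := hr
              simp only
              rw [Sigma.ext_iff]
              refine ⟨?_, HEq.rfl⟩
              rw [Prod.mk.injEq]
              exact ⟨rfl, hde⟩
            · rintro ⟨⟨d, u⟩, ⟨e, m⟩⟩ hr
              simp only [Finset.mem_sigma, Nat.mem_divisorsAntidiagonal] at hr
              obtain ⟨⟨hdu, hn0⟩, ⟨hem, hu0⟩⟩ := hr
              simp only
              have hm : 1 ≤ m := by
                rcases Nat.eq_zero_or_pos m with h0 | h0
                · exfalso; rw [h0, mul_zero] at hem; exact hu0 hem.symm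
                · exact h0
              have he : 1 ≤ e := by
                rcases Nat.eq_zero_or_pos e with h0 | h0
                · exfalso; rw [h0, zero_mul] at hem; exact hu0 hem.symm
                · exact h0
              rw [← hem, slog_mul w he hm]
              ring
          rw [hbij]
          -- now back from sigma
          rw [show (∑ r ∈ n.divisorsAntidiagonal.sigma (fun p => p.2.divisorsAntidiagonal),
              cc α r.1.1 * ((β r.2.1).eval x * (α r.2.2).eval (z + slog w r.1.1 + slog w r.2.2)))
            = ∑ p ∈ n.divisorsAntidiagonal, cc α p.1 *
                ∑ q ∈ p.2.divisorsAntidiagonal,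
                  (β q.1).eval x * (α q.2).eval (z + slog w p.1 + slog w q.2) by
            rw [Finset.sum_sigma]
            apply Finset.sum_congr rfl
            intro p _
            rw [Finset.mul_sum]]
          -- apply IH per (m, v)
          have hstep : ∀ p ∈ n.divisorsAntidiagonal,
              cc α p.1 * ∑ q ∈ p.2.divisorsAntidiagonal,
                  (β q.1).eval x * (α q.2).eval (z + slog w p.1 + slog w q.2)
              = cc α p.1 * (α p.2).eval (x + z + slog w n) := by
            rintro ⟨m, v⟩ hp
            rw [Nat.mem_divisorsAntidiagonal] at hp
            simp only at hp ⊢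
            have hv : 1 ≤ v := by
              by_contra h0
              have : v = 0 := by omega
              rw [this, mul_zero] at hp
              omega
            have hm : 1 ≤ m := by
              by_contra h0
              have : m = 0 := by omega
              rw [this, zero_mul] at hp
              omega
            rcases Nat.lt_or_ge m 2 with hm2 | hm2
            · have : m = 1 := by omega
              subst this
              rw [cc_one hα, zero_mul, zero_mul]
            · have hvlt : v < n := by
                have h2v : 2 * v ≤ m * v := Nat.mul_le_mul_right v (by omega)
                omega
              have hinner : ∑ q ∈ v.divisorsAntidiagonal,
                  (β q.1).eval x * (α q.2).eval (z + slog w m + slog w q.2)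
                  = (α v).eval (x + (z + slog w m) + slog w v) := by
                rw [← ih v hvlt hv x (z + slog w m)]
                rw [← Nat.sum_divisorsAntidiagonal (fun d e => (β d).eval x *
                  (α e).eval (z + slog w m + slog w e))]
              rw [hinner, ← hp.1, slog_mul w hm hv]
              rw [show x + (z + slog w m) + slog w v = x + z + (slog w m + slog w v) by ring]
          rw [Finset.sum_congr rfl hstep]
          -- final: antidiagonal back to divisors and deriv_rel
          rw [Nat.sum_divisorsAntidiagonal (fun m v => cc α m * (α v).eval (x + z + slog w n))]
          rw [← Nat.sum_div_divisors n
            (fun m => cc α m * (α (n / m)).eval (x + z + slog w n))]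
          rw [deriv_rel hα (by omega : 1 ≤ n) (x + z + slog w n)]
          apply Finset.sum_congr rfl
          intro d hd
          rw [Nat.div_div_self (Nat.mem_divisors.1 hd).1 (by omega)]
      have := congrArg (Polynomial.eval y) hPQ
      rw [hPeval, hQeval] at this
      rw [this]

end H1




lemma sum_divisors_swap {n : ℕ} (hn : 1 ≤ n) (g : ℕ → ℕ → ℂ) :
    ∑ d ∈ n.divisors, g d (n / d) = ∑ d ∈ n.divisors, g (n / d) d := by
  rw [← Nat.sum_div_divisors n (fun d => g d (n / d))]
  apply Finset.sum_congr rfl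
  intro d hd
  rw [Nat.div_div_self (Nat.mem_divisors.1 hd).1 (by omega)]


end DCPaux

theorem stmt_11 (α : ℕ → Polynomial ℂ) (hα : IsDirichletConvPolyFamily α)
    (αhat : ℕ → Polynomial ℂ)
    (hhat : ∀ n : ℕ, 2 ≤ n → Polynomial.X * αhat n = α n)
    (w : ℂ)
    (β : ℕ → Polynomial ℂ)
    (hβ1 : β 1 = 1)
    -- for `n ≥ 2`, `β n (x) = x · α̂ n (x + w·ln n)`
    (hβ : ∀ n : ℕ, 2 ≤ n →
      β n = Polynomial.X *
        (αhat n).comp (Polynomial.X + Polynomial.C (w * (Real.log n : ℂ)))) :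
    IsDirichletConvPolyFamily β := by
  classical
  constructor
  · exact hβ1
  · intro n hn x y
    rcases Nat.lt_or_ge n 2 with h2 | h2
    · have : n = 1 := by omega
      subst this
      rw [Nat.divisors_one]
      simp [hβ1]
    · -- key pointwise identity
      have hkey : ∀ x' : ℂ,
          (x' + y + DCPaux.slog w n) *
            ((∑ d ∈ n.divisors, (β d).eval x' * (β (n / d)).eval y)
              - (β n).eval (x' + y)) = 0 := by
        intro x'
        set S : ℂ := ∑ d ∈ n.divisors, (β d).eval x' * (β (n / d)).eval y with hS
        have hM1 := DCPaux.H1 hα hhat hβ1 hβ (show 1 ≤ n by omega) x' y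
        have hM2 := DCPaux.H1 hα hhat hβ1 hβ (show 1 ≤ n by omega) y x'
        rw [show y + x' + DCPaux.slog w n = x' + y + DCPaux.slog w n by ring] at hM2
        have hmemfacts : ∀ d ∈ n.divisors, 1 ≤ d ∧ d ∣ n ∧ 1 ≤ n / d := by
          intro d hd
          have hdpos : 1 ≤ d := Nat.pos_of_mem_divisors hd
          have hdvd : d ∣ n := (Nat.mem_divisors.1 hd).1
          exact ⟨hdpos, hdvd, Nat.div_pos (Nat.le_of_dvd (by omega) hdvd) hdpos⟩
        have hE1 : ∑ d ∈ n.divisors,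
            (y + DCPaux.slog w (n / d)) * ((β d).eval x' * (β (n / d)).eval y)
            = y * (α n).eval (x' + y + DCPaux.slog w n) := by
          rw [← hM1, Finset.mul_sum]
          apply Finset.sum_congr rfl
          intro d hd
          obtain ⟨hd1, hdvd, hnd1⟩ := hmemfacts d hd
          have hk := DCPaux.key_rel hα hhat hβ1 hβ hnd1 y
          linear_combination (-(β d).eval x') * hk
        have hE2 : ∑ d ∈ n.divisors,
            (x' + DCPaux.slog w d) * ((β d).eval x' * (β (n / d)).eval y)
            = x' * (α n).eval (x' + y + DCPaux.slog w n) := by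
          rw [← hM2, Finset.mul_sum]
          rw [DCPaux.sum_divisors_swap (show 1 ≤ n by omega)
            (fun d e => (x' + DCPaux.slog w d) * ((β d).eval x' * (β e).eval y))]
          apply Finset.sum_congr rfl
          intro d hd
          obtain ⟨hd1, hdvd, hnd1⟩ := hmemfacts d hd
          have hk := DCPaux.key_rel hα hhat hβ1 hβ hnd1 x'
          linear_combination (-(β d).eval y) * hk
        have hdsum : ∀ d ∈ n.divisors,
            DCPaux.slog w d + DCPaux.slog w (n / d) = DCPaux.slog w n := by
          intro d hd
          obtain ⟨hd1, hdvd, _⟩ := hmemfacts d hd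
          rw [DCPaux.slog_div w hdvd hd1 (by omega)]
          ring
        have hA : (x' + y + DCPaux.slog w n) * S
            = (∑ d ∈ n.divisors,
                (y + DCPaux.slog w (n / d)) * ((β d).eval x' * (β (n / d)).eval y))
              + ∑ d ∈ n.divisors,
                (x' + DCPaux.slog w d) * ((β d).eval x' * (β (n / d)).eval y) := by
          rw [hS, Finset.mul_sum, ← Finset.sum_add_distrib]
          apply Finset.sum_congr rfl
          intro d hd
          linear_combination (-((β d).eval x' * (β (n / d)).eval y)) * (hdsum d hd)
        have hKn := DCPaux.key_rel hα hhat hβ1 hβ (show 1 ≤ n by omega) (x' + y)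
        -- hKn : (x'+y) * α_n(x'+y+slog n) = (x'+y+slog n) * β_n(x'+y)
        linear_combination hA + hE1 + hE2 + hKn
      -- conclude by density
      have hfun : (fun x' : ℂ => ∑ d ∈ n.divisors, (β d).eval x' * (β (n / d)).eval y)
          = (fun x' : ℂ => (β n).eval (x' + y)) := by
        apply Continuous.ext_on (dense_compl_singleton (-(y + DCPaux.slog w n)))
        · apply continuous_finset_sum
          intro d _
          exact ((β d).continuous_aeval).mul continuous_const
        · exact ((β n).continuous_aeval).comp (continuous_id.add continuous_const)
        · intro z hz
          simp only [Set.mem_compl_iff, Set.mem_singleton_iff] at hz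
          have hz' : z + y + DCPaux.slog w n ≠ 0 := by
            intro h
            apply hz
            linear_combination h
          have := hkey z
          rcases mul_eq_zero.1 this with h | h
          · exact absurd h hz'
          · exact sub_eq_zero.1 h
      have := congrFun hfun x
      simpa using this.symm
end

section
/- Let f(s) = ∑_{n≥2} c_n n^{−s} be a Dirichlet series with complex coefficients and zero constant term that converges absolutely in some half-plane, and fix w ∈ ℂ. Then there exists a Dirichlet series g(s) = ∑_{n≥2} b_n n^{−s} with zero constant term, converging absolutely in some half-plane, such that f(s − w·g(s)) = g(s) for all s with Re(s) sufficiently large; and g is unique, i.e. any other Dirichlet series with zero constant term, absolutely convergent in some half-plane and satisfying the same equation for all Re(s) sufficiently large, has the same coefficients as g. -/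
/-- The Dirichlet series `∑_{n} c n · n^{-s}` (as a `tsum`). -/
noncomputable def DSeries (c : ℕ → ℂ) (s : ℂ) : ℂ :=
  ∑' n : ℕ, c n * (n : ℂ) ^ (-s)

/-- `c` is the coefficient sequence of a Dirichlet series with zero constant term that
converges absolutely in some half-plane. -/
def IsD0 (c : ℕ → ℂ) : Prop :=
  c 0 = 0 ∧ c 1 = 0 ∧
    ∃ θ : ℝ, ∀ s : ℂ, θ < s.re → Summable fun n : ℕ => ‖c n * (n : ℂ) ^ (-s)‖

open Finset LSeries Complex
open scoped LSeries.notation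

namespace Stmt14

variable {R : Type*} [CommSemiring R]

/-- k-th Dirichlet convolution power. -/
noncomputable def dpow (f : ℕ → R) : ℕ → ℕ → R
  | 0 => fun n => if n = 1 then 1 else 0
  | (k+1) => f ⍟ dpow f k

lemma dpow_zero (f : ℕ → R) : dpow f 0 = fun n => if n = 1 then 1 else 0 := rfl

lemma dpow_succ (f : ℕ → R) (k : ℕ) : dpow f (k+1) = f ⍟ dpow f k := rfl

lemma dpow_apply_zero (f : ℕ → R) (k : ℕ) : dpow f k 0 = 0 := by
  cases k with
  | zero => simp [dpow]
  | succ k => exact convolution_map_zero f (dpow f k)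

lemma conv_apply (f g : ℕ → R) (n : ℕ) :
    (f ⍟ g) n = ∑ p ∈ n.divisorsAntidiagonal, f p.1 * g p.2 := by
  rw [convolution_def]

lemma fst_pos_of_mem {m : ℕ} {p : ℕ × ℕ} (hp : p ∈ m.divisorsAntidiagonal) : 0 < p.1 := by
  rcases Nat.mem_divisorsAntidiagonal.mp hp with ⟨h1, h2⟩
  rcases Nat.eq_zero_or_pos p.1 with h | h
  · exact absurd (by rw [← h1, h, zero_mul]) h2
  · exact h

lemma snd_pos_of_mem {m : ℕ} {p : ℕ × ℕ} (hp : p ∈ m.divisorsAntidiagonal) : 0 < p.2 := by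
  rcases Nat.mem_divisorsAntidiagonal.mp hp with ⟨h1, h2⟩
  rcases Nat.eq_zero_or_pos p.2 with h | h
  · exact absurd (by rw [← h1, h, mul_zero]) h2
  · exact h

lemma dpow_eq_zero_of_lt_two_pow (f : ℕ → R) (hf1 : f 1 = 0) :
    ∀ k d, d < 2 ^ k → dpow f k d = 0 := by
  intro k
  induction k with
  | zero =>
    intro d hd
    interval_cases d
    simp [dpow]
  | succ k ih =>
    intro d hd
    rw [dpow_succ, conv_apply]
    refine Finset.sum_eq_zero fun p hp => ?_
    rcases Nat.mem_divisorsAntidiagonal.mp hp with ⟨h1, h2⟩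
    rcases eq_or_lt_of_le (Nat.succ_le_of_lt (fst_pos_of_mem hp)) with h | h
    · rw [show p.1 = 1 by omega, hf1, zero_mul]
    · have h2' : 2 ≤ p.1 := h
      have hkk : p.2 < 2 ^ k := by
        have hmul : 2 * p.2 ≤ p.1 * p.2 := Nat.mul_le_mul_right _ h2'
        have : d < 2 * 2 ^ k := by rw [← pow_succ']; exact hd
        omega
      rw [ih p.2 hkk, mul_zero]

lemma dpow_congr {f g : ℕ → R} (k : ℕ) {d : ℕ} (h : ∀ j ≤ d, f j = g j) :
    ∀ j ≤ d, dpow f k j = dpow g k j := by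
  induction k with
  | zero => intro j _; rfl
  | succ k ih =>
    intro j hj
    rw [dpow_succ, dpow_succ, conv_apply, conv_apply]
    refine Finset.sum_congr rfl fun p hp => ?_
    rcases Nat.mem_divisorsAntidiagonal.mp hp with ⟨h1, _⟩
    have hp1 : p.1 ≤ d := le_trans (Nat.le_of_dvd (by omega) ⟨p.2, h1.symm⟩) hj
    have hp2 : p.2 ≤ d := le_trans (Nat.le_of_dvd (by omega) ⟨p.1, by rw [← h1, mul_comm]⟩) hj
    rw [h p.1 hp1, ih p.2 hp2]

lemma conv_nonneg {f g : ℕ → ℝ} (hf : ∀ n, 0 ≤ f n) (hg : ∀ n, 0 ≤ g n) (n : ℕ) :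
    0 ≤ (f ⍟ g) n := by
  rw [conv_apply]
  exact Finset.sum_nonneg fun p _ => mul_nonneg (hf _) (hg _)

lemma dpow_nonneg {f : ℕ → ℝ} (hf : ∀ n, 0 ≤ f n) (k n : ℕ) : 0 ≤ dpow f k n := by
  induction k generalizing n with
  | zero => by_cases h : n = 1 <;> simp [dpow, h]
  | succ k ih => exact conv_nonneg hf (fun m => ih m) n

lemma norm_conv_le (f g : ℕ → ℂ) (n : ℕ) :
    ‖(f ⍟ g) n‖ ≤ ((fun m => ‖f m‖) ⍟ (fun m => ‖g m‖)) n := by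
  rw [conv_apply, conv_apply]
  refine le_trans (norm_sum_le _ _) (le_of_eq (Finset.sum_congr rfl fun p _ => ?_))
  exact norm_mul _ _

lemma norm_dpow_le (f : ℕ → ℂ) (k n : ℕ) :
    ‖dpow f k n‖ ≤ dpow (fun m => ‖f m‖) k n := by
  induction k generalizing n with
  | zero => by_cases h : n = 1 <;> simp [dpow, h]
  | succ k ih =>
    refine le_trans (norm_conv_le _ _ _) ?_
    rw [dpow_succ, conv_apply, conv_apply]
    refine Finset.sum_le_sum fun p _ => ?_
    exact mul_le_mul_of_nonneg_left (ih p.2) (norm_nonneg _)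

/-! ### The coefficient transformation -/

/-- Coefficients of the `k`-th exponential layer. -/
noncomputable def ck (c : ℕ → ℂ) (w : ℂ) (k : ℕ) : ℕ → ℂ :=
  fun n => c n * (w * (Real.log n : ℂ)) ^ k / (Nat.factorial k)

/-- The transformation on coefficient sequences corresponding to `b ↦ f(s - w·B(s))`. -/
noncomputable def Tmap (c : ℕ → ℂ) (w : ℂ) (f : ℕ → ℂ) (m : ℕ) : ℂ :=
  ∑ k ∈ range (m+1), (ck c w k ⍟ dpow f k) m

lemma ck_one (c : ℕ → ℂ) (hc1 : c 1 = 0) (w : ℂ) (k : ℕ) : ck c w k 1 = 0 := by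
  simp [ck, hc1]

lemma Tmap_apply_zero (c : ℕ → ℂ) (w : ℂ) (f : ℕ → ℂ) : Tmap c w f 0 = 0 := by
  simp [Tmap, convolution_map_zero]

lemma Tmap_apply_one (c : ℕ → ℂ) (hc1 : c 1 = 0) (w : ℂ) (f : ℕ → ℂ) :
    Tmap c w f 1 = 0 := by
  rw [Tmap]
  refine Finset.sum_eq_zero fun k _ => ?_
  rw [conv_apply]
  refine Finset.sum_eq_zero fun p hp => ?_
  rcases Nat.mem_divisorsAntidiagonal.mp hp with ⟨h1, _⟩
  have : p.1 = 1 := Nat.eq_one_of_mul_eq_one_right h1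
  rw [this, ck_one c hc1, zero_mul]

lemma Tmap_congr (c : ℕ → ℂ) (hc1 : c 1 = 0) (w : ℂ) {f g : ℕ → ℂ} {m : ℕ}
    (h : ∀ j < m, f j = g j) : Tmap c w f m = Tmap c w g m := by
  rw [Tmap, Tmap]
  refine Finset.sum_congr rfl fun k _ => ?_
  rw [conv_apply, conv_apply]
  refine Finset.sum_congr rfl fun p hp => ?_
  rcases Nat.mem_divisorsAntidiagonal.mp hp with ⟨h1, h2⟩
  rcases eq_or_lt_of_le (Nat.succ_le_of_lt (fst_pos_of_mem hp)) with h' | h'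
  · rw [show p.1 = 1 by omega, ck_one c hc1, zero_mul, zero_mul]
  · have h2' : 2 ≤ p.1 := h'
    have hlt : p.2 < m := by
      have := snd_pos_of_mem hp
      have : 2 * p.2 ≤ p.1 * p.2 := Nat.mul_le_mul_right _ h2'
      omega
    rw [dpow_congr k (fun j hj => h j (lt_of_le_of_lt hj hlt)) p.2 le_rfl]

/-- The solution coefficient sequence, defined by strong recursion. -/
noncomputable def bseq (c : ℕ → ℂ) (w : ℂ) : ℕ → ℂ
  | m => Tmap c w (fun j => if h : j < m then bseq c w j else 0) m
  decreasing_by exact h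

lemma bseq_eq (c : ℕ → ℂ) (hc1 : c 1 = 0) (w : ℂ) (m : ℕ) :
    bseq c w m = Tmap c w (bseq c w) m := by
  rw [bseq]
  exact Tmap_congr c hc1 w fun j hj => dif_pos hj

lemma bseq_apply_zero (c : ℕ → ℂ) (w : ℂ) : bseq c w 0 = 0 := by
  rw [bseq]; exact Tmap_apply_zero _ _ _

lemma bseq_apply_one (c : ℕ → ℂ) (hc1 : c 1 = 0) (w : ℂ) : bseq c w 1 = 0 := by
  rw [bseq]; exact Tmap_apply_one _ hc1 _ _

/-! ### Finite-sum bounds -/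

/-- Weighted partial sums of a Dirichlet convolution are bounded by products. -/
lemma sum_conv_le {f g : ℕ → ℝ} (hf : ∀ n, 0 ≤ f n) (hg : ∀ n, 0 ≤ g n) (σ : ℝ) (M : ℕ) :
    ∑ m ∈ range M, (f ⍟ g) m * (m : ℝ) ^ (-σ) ≤
      (∑ n ∈ range M, f n * (n : ℝ) ^ (-σ)) * (∑ n ∈ range M, g n * (n : ℝ) ^ (-σ)) := by
  have key : ∀ m ∈ range M, (f ⍟ g) m * (m : ℝ) ^ (-σ) =
      ∑ p ∈ m.divisorsAntidiagonal, (f p.1 * (p.1 : ℝ) ^ (-σ)) * (g p.2 * (p.2 : ℝ) ^ (-σ)) := by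
    intro m _
    rw [conv_apply, Finset.sum_mul]
    refine Finset.sum_congr rfl fun p hp => ?_
    rcases Nat.mem_divisorsAntidiagonal.mp hp with ⟨h1, _⟩
    rw [← h1]
    push_cast
    rw [Real.mul_rpow (by positivity) (by positivity)]
    ring
  rw [Finset.sum_congr rfl key]
  have hdisj : (range M : Set ℕ).PairwiseDisjoint Nat.divisorsAntidiagonal := by
    intro a _ b _ hab
    refine Finset.disjoint_left.mpr fun p hpa hpb => hab ?_
    rcases Nat.mem_divisorsAntidiagonal.mp hpa with ⟨h1, _⟩
    rcases Nat.mem_divisorsAntidiagonal.mp hpb with ⟨h2, _⟩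
    rw [← h1, ← h2]
  rw [← Finset.sum_biUnion hdisj]
  have hsub : (range M).biUnion Nat.divisorsAntidiagonal ⊆ range M ×ˢ range M := by
    intro p hp
    rcases Finset.mem_biUnion.mp hp with ⟨m, hm, hpm⟩
    rcases Nat.mem_divisorsAntidiagonal.mp hpm with ⟨h1, h2⟩
    have hm' : m < M := Finset.mem_range.mp hm
    have hp1 : p.1 ≤ m := Nat.le_of_dvd (by omega) ⟨p.2, h1.symm⟩
    have hp2 : p.2 ≤ m := Nat.le_of_dvd (by omega) ⟨p.1, by rw [← h1, mul_comm]⟩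
    exact Finset.mem_product.mpr ⟨Finset.mem_range.mpr (by omega), Finset.mem_range.mpr (by omega)⟩
  refine le_trans (Finset.sum_le_sum_of_subset_of_nonneg hsub fun p _ _ => ?_) ?_
  · exact mul_nonneg (mul_nonneg (hf _) (by positivity)) (mul_nonneg (hg _) (by positivity))
  · rw [Finset.sum_product]
    rw [Finset.sum_mul_sum]

/-- Weighted partial sums of convolution powers are bounded by powers. -/
lemma sum_dpow_le {f : ℕ → ℝ} (hf : ∀ n, 0 ≤ f n) {σ : ℝ} {M : ℕ} {B : ℝ} (hB : 0 ≤ B)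
    (h : ∑ j ∈ range M, f j * (j : ℝ) ^ (-σ) ≤ B) (k : ℕ) :
    ∑ d ∈ range M, dpow f k d * (d : ℝ) ^ (-σ) ≤ B ^ k := by
  induction k with
  | zero =>
    rw [pow_zero]
    have : ∀ d ∈ range M, dpow f 0 d * (d : ℝ) ^ (-σ) =
        if d = 1 then ((1:ℕ) : ℝ) ^ (-σ) else 0 := by
      intro d _
      by_cases hd : d = 1 <;> simp [dpow, hd]
    rw [Finset.sum_congr rfl this, Finset.sum_ite_eq' (range M) 1]
    by_cases h1 : 1 ∈ range M <;> simp [h1, Real.one_rpow]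
  | succ k ih =>
    rw [pow_succ']
    exact le_trans (sum_conv_le hf (dpow_nonneg hf k) σ M) (by
      exact mul_le_mul h ih (Finset.sum_nonneg fun d _ =>
        mul_nonneg (dpow_nonneg hf k d) (by positivity)) hB)

section Bounds

variable {c : ℕ → ℂ} {w : ℂ}

/-- Real majorant coefficients for `ck`. -/
noncomputable def eta (c : ℕ → ℂ) (w : ℂ) (k : ℕ) : ℕ → ℝ :=
  fun n => ‖c n‖ * (‖w‖ * Real.log n) ^ k / (Nat.factorial k)

lemma log_nat_nonneg (n : ℕ) : 0 ≤ Real.log n := by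
  cases n with
  | zero => simp
  | succ n => exact Real.log_nonneg (by exact_mod_cast Nat.one_le_iff_ne_zero.mpr (Nat.succ_ne_zero n))

lemma eta_nonneg (c : ℕ → ℂ) (w : ℂ) (k n : ℕ) : 0 ≤ eta c w k n := by
  have h1 := log_nat_nonneg n
  have h2 : (0:ℝ) ≤ (‖w‖ * Real.log n) ^ k := pow_nonneg (mul_nonneg (norm_nonneg w) h1) k
  have h3 : (0:ℝ) < (Nat.factorial k : ℝ) := by exact_mod_cast Nat.factorial_pos k
  rw [eta]
  positivity

lemma norm_ck_eq (c : ℕ → ℂ) (w : ℂ) (k n : ℕ) : ‖ck c w k n‖ = eta c w k n := by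
  rw [ck, eta, norm_div, norm_mul, norm_pow, norm_mul]
  congr 2
  · rw [Complex.norm_real, Real.norm_of_nonneg (log_nat_nonneg n)]
  · rw [Complex.norm_natCast]

lemma eta_one (hc1 : c 1 = 0) (k : ℕ) : eta c w k 1 = 0 := by
  simp [eta, hc1]

lemma norm_Tmap_le (c : ℕ → ℂ) (w : ℂ) (f : ℕ → ℂ) (m : ℕ) :
    ‖Tmap c w f m‖ ≤ ∑ k ∈ range (m+1), (eta c w k ⍟ dpow (fun j => ‖f j‖) k) m := by
  refine le_trans (norm_sum_le _ _) (Finset.sum_le_sum fun k _ => ?_)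
  refine le_trans (norm_conv_le _ _ _) ?_
  rw [conv_apply, conv_apply]
  refine Finset.sum_le_sum fun p _ => ?_
  rw [norm_ck_eq]
  exact mul_le_mul_of_nonneg_left (norm_dpow_le _ _ _) (eta_nonneg c w k p.1)

lemma per_n_bound (hc0 : c 0 = 0) (θ : ℝ) (n K : ℕ) :
    ‖c n‖ * (∑ k ∈ range K, (‖w‖ * Real.log n) ^ k / (Nat.factorial k)) * (n : ℝ) ^ (-θ)
      ≤ ‖c n‖ * (n : ℝ) ^ (-(θ - ‖w‖)) := by
  cases n with
  | zero => rw [hc0]; simp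
  | succ n =>
    have hn : (0:ℝ) < (n+1 : ℕ) := by positivity
    have hlog : 0 ≤ ‖w‖ * Real.log (n+1 : ℕ) :=
      mul_nonneg (norm_nonneg w) (log_nat_nonneg _)
    have hexp : (∑ k ∈ range K, (‖w‖ * Real.log (n+1 : ℕ)) ^ k / (Nat.factorial k))
        ≤ Real.exp (‖w‖ * Real.log (n+1 : ℕ)) := Real.sum_le_exp_of_nonneg hlog K
    have he : Real.exp (‖w‖ * Real.log (n+1 : ℕ)) = ((n+1 : ℕ) : ℝ) ^ (‖w‖) := by
      rw [Real.rpow_def_of_pos hn, mul_comm]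
    have hrw : ((n+1 : ℕ) : ℝ) ^ (‖w‖) * ((n+1 : ℕ) : ℝ) ^ (-θ)
        = ((n+1 : ℕ) : ℝ) ^ (-(θ - ‖w‖)) := by
      rw [← Real.rpow_add hn]; ring_nf
    calc ‖c (n+1)‖ * (∑ k ∈ range K, (‖w‖ * Real.log (n+1 : ℕ)) ^ k / (Nat.factorial k))
          * ((n+1 : ℕ) : ℝ) ^ (-θ)
        ≤ ‖c (n+1)‖ * Real.exp (‖w‖ * Real.log (n+1 : ℕ)) * ((n+1 : ℕ) : ℝ) ^ (-θ) := by
          refine mul_le_mul_of_nonneg_right (mul_le_mul_of_nonneg_left hexp (norm_nonneg _)) ?_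
          positivity
      _ = ‖c (n+1)‖ * ((n+1 : ℕ) : ℝ) ^ (-(θ - ‖w‖)) := by
          rw [he, mul_assoc, hrw]

lemma rpow_base_le {n : ℕ} (hn : 2 ≤ n) {e : ℝ} (he : e ≤ 0) :
    (n : ℝ) ^ e ≤ (2 : ℝ) ^ e := by
  have h2 : (0:ℝ) < 2 := by norm_num
  have hn' : (0:ℝ) < n := by positivity
  rw [Real.rpow_def_of_pos hn', Real.rpow_def_of_pos h2]
  refine Real.exp_le_exp.mpr ?_
  have : Real.log 2 ≤ Real.log n := Real.log_le_log h2 (by exact_mod_cast hn)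
  nlinarith

lemma c_pointwise (hc0 : c 0 = 0) (hc1 : c 1 = 0) {σ0 x : ℝ} (hx : σ0 ≤ x) (n : ℕ) :
    ‖c n‖ * (n : ℝ) ^ (-x) ≤ (2 : ℝ) ^ (σ0 - x) * (‖c n‖ * (n : ℝ) ^ (-σ0)) := by
  match n with
  | 0 => rw [hc0]; simp
  | 1 => rw [hc1]; simp
  | (n+2) =>
    have hn : (0:ℝ) < ((n+2 : ℕ) : ℝ) := by positivity
    have h1 : ((n+2:ℕ) : ℝ) ^ (-x) = ((n+2:ℕ):ℝ) ^ (σ0 - x) * ((n+2:ℕ):ℝ) ^ (-σ0) := by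
      rw [← Real.rpow_add hn]; ring_nf
    have h2 : ((n+2:ℕ):ℝ) ^ (σ0 - x) ≤ (2:ℝ) ^ (σ0 - x) :=
      rpow_base_le (by omega) (by linarith)
    rw [h1]
    have : ‖c (n+2)‖ * (((n+2:ℕ):ℝ) ^ (σ0 - x) * ((n+2:ℕ):ℝ) ^ (-σ0))
        ≤ ‖c (n+2)‖ * ((2:ℝ) ^ (σ0 - x) * ((n+2:ℕ):ℝ) ^ (-σ0)) := by
      refine mul_le_mul_of_nonneg_left (mul_le_mul_of_nonneg_right h2 ?_) (norm_nonneg _)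
      positivity
    calc ‖c (n+2)‖ * (((n+2:ℕ):ℝ) ^ (σ0 - x) * ((n+2:ℕ):ℝ) ^ (-σ0))
        ≤ ‖c (n+2)‖ * ((2:ℝ) ^ (σ0 - x) * ((n+2:ℕ):ℝ) ^ (-σ0)) := this
      _ = (2:ℝ) ^ (σ0 - x) * (‖c (n+2)‖ * ((n+2:ℕ):ℝ) ^ (-σ0)) := by ring

lemma summable_c_at (hc0 : c 0 = 0) (hc1 : c 1 = 0) {σ0 : ℝ}
    (hA : Summable fun n : ℕ => ‖c n‖ * (n : ℝ) ^ (-σ0)) {x : ℝ} (hx : σ0 ≤ x) :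
    Summable fun n : ℕ => ‖c n‖ * (n : ℝ) ^ (-x) :=
  Summable.of_nonneg_of_le (fun n => by positivity) (c_pointwise hc0 hc1 hx)
    (hA.mul_left _)

lemma tsum_c_le (hc0 : c 0 = 0) (hc1 : c 1 = 0) {σ0 : ℝ}
    (hA : Summable fun n : ℕ => ‖c n‖ * (n : ℝ) ^ (-σ0)) {x : ℝ} (hx : σ0 ≤ x) :
    ∑' n : ℕ, ‖c n‖ * (n : ℝ) ^ (-x)
      ≤ (2 : ℝ) ^ (σ0 - x) * ∑' n : ℕ, ‖c n‖ * (n : ℝ) ^ (-σ0) := by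
  refine le_trans (Summable.tsum_le_tsum (c_pointwise hc0 hc1 hx)
    (summable_c_at hc0 hc1 hA hx) (hA.mul_left _)) ?_
  rw [tsum_mul_left]

/-- The key recursive bound: partial sums of the weighted `bseq` norms stay `≤ 1`. -/
lemma bseq_sum_le (hc0 : c 0 = 0) (hc1 : c 1 = 0) {σ0 θ : ℝ}
    (hA : Summable fun n : ℕ => ‖c n‖ * (n : ℝ) ^ (-σ0)) (hθ : σ0 ≤ θ - ‖w‖)
    (h1 : ∑' n : ℕ, ‖c n‖ * (n : ℝ) ^ (-(θ - ‖w‖)) ≤ 1) (M : ℕ) :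
    ∑ m ∈ range M, ‖bseq c w m‖ * (m : ℝ) ^ (-θ) ≤ 1 := by
  induction M using Nat.strong_induction_on with
  | _ M IH =>
  rcases Nat.lt_or_ge M 2 with hM | hM
  · interval_cases M
    · simp
    · simp [bseq_apply_zero]
  · set β : ℕ → ℝ := fun m => ‖bseq c w m‖ with hβ
    set M' := (M+1)/2 with hM'def
    have hM' : M' < M := by omega
    set β' : ℕ → ℝ := fun j => if j < M' then β j else 0 with hβ'
    have hβ'nonneg : ∀ j, 0 ≤ β' j := by
      intro j; rw [hβ']; dsimp only; split
      · exact norm_nonneg _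
      · exact le_rfl
    have hβ'sum : ∑ j ∈ range M, β' j * (j : ℝ) ^ (-θ) ≤ 1 := by
      have heq : ∑ j ∈ range M, β' j * (j : ℝ) ^ (-θ)
          = ∑ j ∈ range M', β j * (j : ℝ) ^ (-θ) := by
        rw [← Finset.sum_subset (Finset.range_subset_range.mpr hM'.le)
          (fun x _ hx => by
            rw [hβ']; dsimp only
            rw [if_neg (by simpa using hx), zero_mul])]
        refine Finset.sum_congr rfl fun j hj => ?_
        rw [hβ']; dsimp only
        rw [if_pos (Finset.mem_range.mp hj)]
      rw [heq]
      exact IH M' hM'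
    have hconv_eq : ∀ m ∈ range M, ∀ k,
        (eta c w k ⍟ dpow β k) m = (eta c w k ⍟ dpow β' k) m := by
      intro m hm k
      rw [conv_apply, conv_apply]
      refine Finset.sum_congr rfl fun p hp => ?_
      rcases Nat.mem_divisorsAntidiagonal.mp hp with ⟨hpm, hm0⟩
      rcases eq_or_lt_of_le (Nat.succ_le_of_lt (fst_pos_of_mem hp)) with h' | h'
      · rw [show p.1 = 1 by omega, eta_one hc1, zero_mul, zero_mul]
      · have h2 : 2 ≤ p.1 := h'
        have hp2 : 2 * p.2 ≤ m := by
          calc 2 * p.2 ≤ p.1 * p.2 := Nat.mul_le_mul_right _ h2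
            _ = m := hpm
        have hmM : m < M := Finset.mem_range.mp hm
        congr 1
        refine dpow_congr k (fun j hj => ?_) p.2 le_rfl
        rw [hβ']; dsimp only
        rw [if_pos (by omega)]
    calc ∑ m ∈ range M, β m * (m : ℝ) ^ (-θ)
        ≤ ∑ m ∈ range M, (∑ k ∈ range (m+1), (eta c w k ⍟ dpow β' k) m)
            * (m : ℝ) ^ (-θ) := by
          refine Finset.sum_le_sum fun m hm => mul_le_mul_of_nonneg_right ?_ (by positivity)
          have : β m = ‖Tmap c w (bseq c w) m‖ := by rw [hβ]; dsimp only; rw [← bseq_eq c hc1 w m]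
          rw [this]
          refine (norm_Tmap_le c w _ m).trans (le_of_eq ?_)
          exact Finset.sum_congr rfl fun k _ => hconv_eq m hm k
      _ ≤ ∑ m ∈ range M, ∑ k ∈ range M, (eta c w k ⍟ dpow β' k) m * (m : ℝ) ^ (-θ) := by
          refine Finset.sum_le_sum fun m hm => ?_
          rw [Finset.sum_mul]
          refine Finset.sum_le_sum_of_subset_of_nonneg
            (Finset.range_subset_range.mpr (by have := Finset.mem_range.mp hm; omega))
            fun k _ _ => mul_nonneg (conv_nonneg (eta_nonneg c w k)
              (dpow_nonneg hβ'nonneg k) m) (by positivity)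
      _ = ∑ k ∈ range M, ∑ m ∈ range M, (eta c w k ⍟ dpow β' k) m * (m : ℝ) ^ (-θ) :=
          Finset.sum_comm
      _ ≤ ∑ k ∈ range M, ∑ n ∈ range M, eta c w k n * (n : ℝ) ^ (-θ) := by
          refine Finset.sum_le_sum fun k _ => ?_
          refine (sum_conv_le (eta_nonneg c w k) (dpow_nonneg hβ'nonneg k) θ M).trans ?_
          refine mul_le_of_le_one_right
            (Finset.sum_nonneg fun n _ => mul_nonneg (eta_nonneg c w k n) (by positivity)) ?_
          have := sum_dpow_le hβ'nonneg zero_le_one hβ'sum k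
          simpa using this
      _ = ∑ n ∈ range M, ‖c n‖
            * (∑ k ∈ range M, (‖w‖ * Real.log n) ^ k / (Nat.factorial k))
            * (n : ℝ) ^ (-θ) := by
          rw [Finset.sum_comm]
          refine Finset.sum_congr rfl fun n _ => ?_
          rw [Finset.mul_sum, Finset.sum_mul]
          refine Finset.sum_congr rfl fun k _ => ?_
          rw [eta]; ring
      _ ≤ ∑ n ∈ range M, ‖c n‖ * (n : ℝ) ^ (-(θ - ‖w‖)) :=
          Finset.sum_le_sum fun n _ => per_n_bound hc0 θ n M
      _ ≤ ∑' n : ℕ, ‖c n‖ * (n : ℝ) ^ (-(θ - ‖w‖)) :=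
          Summable.sum_le_tsum (range M) (fun n _ => by positivity)
            (summable_c_at hc0 hc1 hA hθ)
      _ ≤ 1 := h1

end Bounds

section Analytic

variable {c : ℕ → ℂ} {w : ℂ}

lemma norm_term_fun_eq {f : ℕ → ℂ} (hf0 : f 0 = 0) (s : ℂ) :
    (fun n => ‖term f s n‖) = fun n => ‖f n‖ * (n : ℝ) ^ (-s.re) := by
  funext n
  cases n with
  | zero => simp [term_zero, hf0]
  | succ n =>
    rw [term_of_ne_zero (Nat.succ_ne_zero n)]
    rw [norm_div, Complex.norm_natCast_cpow_of_pos (Nat.succ_pos n)]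
    rw [Real.rpow_neg (by positivity), div_eq_mul_inv]

lemma LSeriesSummable_iff_weighted {f : ℕ → ℂ} (hf0 : f 0 = 0) {s : ℂ} :
    LSeriesSummable f s ↔ Summable fun n : ℕ => ‖f n‖ * (n : ℝ) ^ (-s.re) := by
  rw [LSeriesSummable, ← summable_norm_iff, norm_term_fun_eq hf0]

lemma DSeries_eq_LSeries {f : ℕ → ℂ} (hf0 : f 0 = 0) (s : ℂ) :
    DSeries f s = LSeries f s := by
  rw [DSeries, LSeries]
  refine tsum_congr fun n => ?_
  cases n with
  | zero => simp [term_zero, hf0]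
  | succ n =>
    rw [term_of_ne_zero (Nat.succ_ne_zero n), Complex.cpow_neg, div_eq_mul_inv]

lemma norm_DSeries_le {f : ℕ → ℂ} (hf0 : f 0 = 0) {s : ℂ}
    (hsum : Summable fun n : ℕ => ‖f n‖ * (n : ℝ) ^ (-s.re)) :
    ‖DSeries f s‖ ≤ ∑' n : ℕ, ‖f n‖ * (n : ℝ) ^ (-s.re) := by
  rw [DSeries_eq_LSeries hf0, LSeries]
  refine le_trans (norm_tsum_le_tsum_norm ?_) (le_of_eq ?_)
  · rw [norm_term_fun_eq hf0]; exact hsum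
  · rw [norm_term_fun_eq hf0]

lemma dpow_zero_eq_delta (f : ℕ → ℂ) : dpow f 0 = (δ : ℕ → ℂ) := by
  funext n; rfl

lemma LSeriesSummable_delta (s : ℂ) : LSeriesSummable (δ : ℕ → ℂ) s := by
  refine summable_of_ne_finset_zero (s := {1}) fun n hn => ?_
  rw [term_delta, if_neg (by simpa using hn)]

lemma LSeriesSummable_dpow {b : ℕ → ℂ} {s : ℂ} (hb : LSeriesSummable b s) (k : ℕ) :
    LSeriesSummable (dpow b k) s := by
  induction k with
  | zero => rw [dpow_zero_eq_delta]; exact LSeriesSummable_delta s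
  | succ k ih => exact hb.convolution ih

lemma LSeries_dpow {b : ℕ → ℂ} {s : ℂ} (hb : LSeriesSummable b s) (k : ℕ) :
    LSeries (dpow b k) s = (LSeries b s) ^ k := by
  induction k with
  | zero => rw [dpow_zero_eq_delta, LSeries_delta, pow_zero, Pi.one_apply]
  | succ k ih =>
    rw [dpow_succ, LSeries_convolution' hb (LSeriesSummable_dpow hb k), ih, pow_succ']

lemma summable_dpow_weighted {β : ℕ → ℝ} (hβ : ∀ n, 0 ≤ β n) {σ : ℝ} {B : ℝ} (hB : 0 ≤ B)
    (hpart : ∀ M, ∑ j ∈ range M, β j * (j : ℝ) ^ (-σ) ≤ B) (k : ℕ) :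
    Summable (fun d : ℕ => dpow β k d * (d : ℝ) ^ (-σ)) ∧
      ∑' d : ℕ, dpow β k d * (d : ℝ) ^ (-σ) ≤ B ^ k := by
  have hnn : ∀ d : ℕ, 0 ≤ dpow β k d * (d : ℝ) ^ (-σ) := fun d =>
    mul_nonneg (dpow_nonneg hβ k d) (by positivity)
  have hpartk : ∀ M, ∑ d ∈ range M, dpow β k d * (d : ℝ) ^ (-σ) ≤ B ^ k := fun M =>
    sum_dpow_le hβ hB (hpart M) k
  exact ⟨summable_of_sum_range_le hnn hpartk, Real.tsum_le_of_sum_range_le hnn hpartk⟩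

lemma summable_eta_sigma (hc0 : c 0 = 0) (hc1 : c 1 = 0) {σ0 : ℝ}
    (hA : Summable fun n : ℕ => ‖c n‖ * (n : ℝ) ^ (-σ0)) {σ : ℝ} (hσ : σ0 ≤ σ - ‖w‖) :
    ∀ k : ℕ, Summable fun n : ℕ => eta c w k n * (n : ℝ) ^ (-σ) := by
  intro k
  refine Summable.of_nonneg_of_le
    (fun n => mul_nonneg (eta_nonneg c w k n) (by positivity)) (fun n => ?_)
    (summable_c_at hc0 hc1 hA hσ)
  have h1 : eta c w k n * (n : ℝ) ^ (-σ)
      ≤ ‖c n‖ * (∑ j ∈ range (k+1), (‖w‖ * Real.log n) ^ j / (Nat.factorial j))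
        * (n : ℝ) ^ (-σ) := by
    refine mul_le_mul_of_nonneg_right ?_ (by positivity)
    rw [eta, mul_div_assoc]
    refine mul_le_mul_of_nonneg_left ?_ (norm_nonneg _)
    exact Finset.single_le_sum (f := fun j => (‖w‖ * Real.log n) ^ j / (Nat.factorial j))
      (fun j _ => div_nonneg (pow_nonneg (mul_nonneg (norm_nonneg w) (log_nat_nonneg n)) j)
        (by positivity)) (Finset.self_mem_range_succ k)
  calc eta c w k n * (n : ℝ) ^ (-σ) ≤ _ := h1
    _ ≤ ‖c n‖ * (n : ℝ) ^ (-(σ - ‖w‖)) := per_n_bound hc0 σ n (k+1)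

lemma tsum_eta_le (hc0 : c 0 = 0) {σ : ℝ} (n : ℕ)
    (hs : Summable fun k : ℕ => eta c w k n * (n : ℝ) ^ (-σ)) :
    ∑' k : ℕ, eta c w k n * (n : ℝ) ^ (-σ) ≤ ‖c n‖ * (n : ℝ) ^ (-(σ - ‖w‖)) := by
  refine Real.tsum_le_of_sum_range_le
    (fun k => mul_nonneg (eta_nonneg c w k n) (by positivity)) (fun K => ?_)
  have : ∑ k ∈ range K, eta c w k n * (n : ℝ) ^ (-σ)
      = ‖c n‖ * (∑ k ∈ range K, (‖w‖ * Real.log n) ^ k / (Nat.factorial k))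
        * (n : ℝ) ^ (-σ) := by
    rw [Finset.mul_sum, Finset.sum_mul]
    exact Finset.sum_congr rfl fun k _ => by rw [eta]; ring
  rw [this]
  exact per_n_bound hc0 σ n K

lemma summable_eta_per_n (n : ℕ) (σ : ℝ) :
    Summable fun k : ℕ => eta c w k n * (n : ℝ) ^ (-σ) := by
  have : (fun k : ℕ => eta c w k n * (n : ℝ) ^ (-σ))
      = fun k : ℕ => (‖c n‖ * (n : ℝ) ^ (-σ)) * ((‖w‖ * Real.log n) ^ k / (Nat.factorial k)) := by
    funext k; rw [eta]; ring
  rw [this]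
  exact (Real.summable_pow_div_factorial _).mul_left _

set_option maxHeartbeats 2000000 in
/-- The main analytic identity: composing the Dirichlet series of `c` with `s - w·B(s)`
gives the Dirichlet series of the transformed coefficients. -/
lemma key_identity (hc0 : c 0 = 0) (hc1 : c 1 = 0) {σ0 : ℝ}
    (hA : Summable fun n : ℕ => ‖c n‖ * (n : ℝ) ^ (-σ0))
    {b : ℕ → ℂ} (hb0 : b 0 = 0) (hb1 : b 1 = 0) {s : ℂ} (hσ : σ0 ≤ s.re - ‖w‖)
    (hbpart : ∀ M, ∑ m ∈ range M, ‖b m‖ * (m : ℝ) ^ (-s.re) ≤ 1) :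
    DSeries c (s - w * DSeries b s) = DSeries (Tmap c w b) s ∧
      Summable (fun m : ℕ => ‖Tmap c w b m‖ * (m : ℝ) ^ (-s.re)) := by
  have hbnn : ∀ m : ℕ, 0 ≤ ‖b m‖ * (m : ℝ) ^ (-s.re) := fun m => by positivity
  have hbw : Summable fun m : ℕ => ‖b m‖ * (m : ℝ) ^ (-s.re) :=
    summable_of_sum_range_le hbnn hbpart
  have hbsum : LSeriesSummable b s := (LSeriesSummable_iff_weighted hb0).mpr hbw
  set g : ℂ := LSeries b s with hgdef
  have hgD : DSeries b s = g := DSeries_eq_LSeries hb0 s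
  have hgle : ‖g‖ ≤ 1 := by
    rw [← hgD]
    exact (norm_DSeries_le hb0 hbw).trans (Real.tsum_le_of_sum_range_le hbnn hbpart)
  set β : ℕ → ℝ := fun m => ‖b m‖ with hβdef
  set σ : ℝ := s.re with hσdef
  -- the majorant on pairs (n, k)
  set H : ℕ × ℕ → ℝ := fun p => eta c w p.2 p.1 * (p.1 : ℝ) ^ (-σ) with hHdef
  have hHnn : ∀ p, 0 ≤ H p := fun p => mul_nonneg (eta_nonneg c w p.2 p.1) (by positivity)
  have hHsum : Summable H := by
    refine (summable_prod_of_nonneg hHnn).mpr ⟨fun n => summable_eta_per_n n σ, ?_⟩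
    refine Summable.of_nonneg_of_le (fun n => tsum_nonneg fun k => hHnn (n, k))
      (fun n => tsum_eta_le hc0 n (summable_eta_per_n n σ)) (summable_c_at hc0 hc1 hA hσ)
  -- the complex summand on pairs (n, k)
  set F : ℕ × ℕ → ℂ := fun p =>
    c p.1 * (p.1 : ℂ) ^ (-s) * (w * (Real.log p.1 : ℂ) * g) ^ p.2 / (Nat.factorial p.2)
    with hFdef
  have hFnorm : ∀ p, ‖F p‖ ≤ H p := by
    rintro ⟨n, k⟩
    rcases Nat.eq_zero_or_pos n with rfl | hn
    · simp only [hFdef, hc0, zero_mul, zero_div, norm_zero]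
      exact hHnn _
    · have hnorm : ‖F (n, k)‖
          = ‖c n‖ * (n : ℝ) ^ (-σ) * ‖w * (Real.log n : ℂ) * g‖ ^ k / (Nat.factorial k) := by
        simp only [hFdef]
        rw [norm_div, norm_mul, norm_mul, norm_pow, Complex.norm_natCast,
          Complex.norm_natCast_cpow_of_pos hn, Complex.neg_re]
      rw [hnorm, hHdef]
      simp only
      have hwl : ‖w * (Real.log n : ℂ) * g‖ ≤ ‖w‖ * Real.log n := by
        rw [norm_mul, norm_mul, Complex.norm_real, Real.norm_of_nonneg (log_nat_nonneg n)]
        calc ‖w‖ * Real.log n * ‖g‖ ≤ ‖w‖ * Real.log n * 1 :=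
              mul_le_mul_of_nonneg_left hgle (mul_nonneg (norm_nonneg w) (log_nat_nonneg n))
          _ = ‖w‖ * Real.log n := mul_one _
      rw [eta]
      have hple : ‖w * (Real.log n : ℂ) * g‖ ^ k ≤ (‖w‖ * Real.log n) ^ k :=
        pow_le_pow_left₀ (norm_nonneg _) hwl k
      calc ‖c n‖ * (n : ℝ) ^ (-σ) * ‖w * (Real.log n : ℂ) * g‖ ^ k / (Nat.factorial k)
          ≤ ‖c n‖ * (n : ℝ) ^ (-σ) * (‖w‖ * Real.log n) ^ k / (Nat.factorial k) := by
            refine div_le_div_of_nonneg_right ?_ (by positivity)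
            exact mul_le_mul_of_nonneg_left hple (by positivity)
          _ = ‖c n‖ * (‖w‖ * Real.log n) ^ k / (Nat.factorial k) * (n : ℝ) ^ (-σ) := by ring
  have hFsummable : Summable F :=
    Summable.of_norm (Summable.of_nonneg_of_le (fun p => norm_nonneg _) hFnorm hHsum)
  have hFslice1 : ∀ n, Summable fun k => F (n, k) := fun n =>
    Summable.of_norm (Summable.of_nonneg_of_le (fun k => norm_nonneg _)
      (fun k => hFnorm (n, k)) (summable_eta_per_n n σ))
  have hFslice2 : ∀ k, Summable fun n => F (n, k) := fun k =>
    Summable.of_norm (Summable.of_nonneg_of_le (fun n => norm_nonneg _)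
      (fun n => hFnorm (n, k)) (summable_eta_sigma hc0 hc1 hA hσ k))
  have hexp : ∀ z : ℂ, Complex.exp z = ∑' k : ℕ, z ^ k / (Nat.factorial k) := fun z => by
    rw [Complex.exp_eq_exp_ℂ, NormedSpace.exp_eq_tsum_div]
  have step1 : DSeries c (s - w * DSeries b s) = ∑' n : ℕ, ∑' k : ℕ, F (n, k) := by
    rw [hgD, DSeries]
    refine tsum_congr fun n => ?_
    rcases Nat.eq_zero_or_pos n with rfl | hn
    · have hF0 : ∀ k : ℕ, F (0, k) = 0 := fun k => by
        simp only [hFdef, hc0, zero_mul, zero_div]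
      rw [hc0, zero_mul, tsum_congr hF0, tsum_zero]
    · have hn0 : (n : ℂ) ≠ 0 := Nat.cast_ne_zero.mpr hn.ne'
      have h1 : (n : ℂ) ^ (-(s - w * g)) = (n : ℂ) ^ (-s) * (n : ℂ) ^ (w * g) := by
        rw [show -(s - w * g) = -s + w * g by ring, Complex.cpow_add _ _ hn0]
      have h2 : (n : ℂ) ^ (w * g) = Complex.exp (w * (Real.log n : ℂ) * g) := by
        rw [Complex.cpow_def_of_ne_zero hn0, ← Complex.natCast_log]
        ring_nf
      rw [h1, h2, hexp, ← mul_assoc, ← tsum_mul_left]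
      refine tsum_congr fun k => ?_
      simp only [hFdef]
      ring
  have step2 : ∑' n : ℕ, ∑' k : ℕ, F (n, k) = ∑' k : ℕ, ∑' n : ℕ, F (n, k) :=
    (Summable.tsum_comm' (f := fun n k => F (n, k)) (by exact hFsummable) hFslice1 hFslice2).symm
  have hck0 : ∀ k, ck c w k 0 = 0 := fun k => by rw [ck, hc0, zero_mul, zero_div]
  have hcksum : ∀ k, LSeriesSummable (ck c w k) s := fun k => by
    rw [LSeriesSummable_iff_weighted (hck0 k)]
    have heq : (fun n : ℕ => ‖ck c w k n‖ * (n : ℝ) ^ (-s.re))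
        = fun n : ℕ => eta c w k n * (n : ℝ) ^ (-s.re) := by
      funext n; rw [norm_ck_eq]
    rw [heq]
    exact summable_eta_sigma hc0 hc1 hA hσ k
  set hk : ℕ → ℕ → ℂ := fun k => ck c w k ⍟ dpow b k with hhkdef
  have step3 : ∀ k : ℕ, ∑' n : ℕ, F (n, k) = LSeries (hk k) s := by
    intro k
    have e1 : ∀ n : ℕ, F (n, k) = term (ck c w k) s n * g ^ k := by
      intro n
      rcases Nat.eq_zero_or_pos n with rfl | hn
      · simp only [hFdef, hc0, zero_mul, zero_div, term_zero]
      · have hn0 : (n : ℂ) ≠ 0 := Nat.cast_ne_zero.mpr hn.ne'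
        have hns : (n : ℂ) ^ s ≠ 0 := fun h =>
          hn0 ((Complex.cpow_eq_zero_iff _ _).mp h).1
        rw [term_of_ne_zero hn.ne', hFdef]
        simp only [ck]
        rw [Complex.cpow_neg]
        field_simp
        ring
    rw [tsum_congr e1, tsum_mul_right]
    have e2 : g ^ k = LSeries (dpow b k) s := (LSeries_dpow hbsum k).symm
    rw [show (∑' n : ℕ, term (ck c w k) s n) = LSeries (ck c w k) s from rfl, e2,
      ← LSeries_convolution' (hcksum k) (LSeriesSummable_dpow hbsum k)]
  have hβnn : ∀ n, 0 ≤ β n := fun n => norm_nonneg _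
  set H2 : ℕ × ℕ → ℝ := fun q => (eta c w q.1 ⍟ dpow β q.1) q.2 * (q.2 : ℝ) ^ (-σ)
    with hH2def
  have hH2nn : ∀ q, 0 ≤ H2 q := fun q =>
    mul_nonneg (conv_nonneg (eta_nonneg c w q.1) (dpow_nonneg hβnn q.1) q.2) (by positivity)
  have hhk0 : ∀ k, hk k 0 = 0 := fun k => convolution_map_zero _ _
  have hconvle : ∀ k m, ‖hk k m‖ ≤ (eta c w k ⍟ dpow β k) m := by
    intro k m
    refine (norm_conv_le _ _ m).trans ?_
    rw [conv_apply, conv_apply]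
    refine Finset.sum_le_sum fun p _ => ?_
    rw [norm_ck_eq]
    exact mul_le_mul_of_nonneg_left (norm_dpow_le _ _ _) (eta_nonneg c w k p.1)
  have hterm_le : ∀ k m, ‖term (hk k) s m‖ ≤ H2 (k, m) := by
    intro k m
    have := congrFun (norm_term_fun_eq (hhk0 k) s) m
    rw [this]
    exact mul_le_mul_of_nonneg_right (hconvle k m) (by positivity)
  have hEk_sum : Summable (fun k : ℕ => ∑' n : ℕ, eta c w k n * (n : ℝ) ^ (-σ)) := by
    have hswap : Summable (fun q : ℕ × ℕ => H (q.2, q.1)) := hHsum.prod_symm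
    exact ((summable_prod_of_nonneg (fun q => hHnn (q.2, q.1))).mp hswap).2
  have hH2slice : ∀ k, Summable (fun m : ℕ => H2 (k, m)) ∧
      (∑' m : ℕ, H2 (k, m)) ≤ ∑' n : ℕ, eta c w k n * (n : ℝ) ^ (-σ) := by
    intro k
    have hnn : ∀ m : ℕ, 0 ≤ H2 (k, m) := fun m => hH2nn (k, m)
    have hpart : ∀ M : ℕ, ∑ m ∈ range M, H2 (k, m)
        ≤ ∑' n : ℕ, eta c w k n * (n : ℝ) ^ (-σ) := by
      intro M
      refine (sum_conv_le (eta_nonneg c w k) (dpow_nonneg hβnn k) σ M).trans ?_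
      have h1 : ∑ n ∈ range M, eta c w k n * (n : ℝ) ^ (-σ)
          ≤ ∑' n : ℕ, eta c w k n * (n : ℝ) ^ (-σ) :=
        Summable.sum_le_tsum (range M) (fun n _ => mul_nonneg (eta_nonneg c w k n) (by positivity))
          (summable_eta_sigma hc0 hc1 hA hσ k)
      have h2 : ∑ d ∈ range M, dpow β k d * (d : ℝ) ^ (-σ) ≤ 1 := by
        have := sum_dpow_le hβnn zero_le_one (hbpart M) k
        simpa using this
      calc (∑ n ∈ range M, eta c w k n * (n : ℝ) ^ (-σ))
            * (∑ d ∈ range M, dpow β k d * (d : ℝ) ^ (-σ))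
          ≤ (∑' n : ℕ, eta c w k n * (n : ℝ) ^ (-σ)) * 1 := by
            refine mul_le_mul h1 h2 (Finset.sum_nonneg fun d _ =>
              mul_nonneg (dpow_nonneg hβnn k d) (by positivity))
              (tsum_nonneg fun n => mul_nonneg (eta_nonneg c w k n) (by positivity))
        _ = ∑' n : ℕ, eta c w k n * (n : ℝ) ^ (-σ) := mul_one _
    exact ⟨summable_of_sum_range_le hnn hpart, Real.tsum_le_of_sum_range_le hnn hpart⟩
  have hH2sum : Summable H2 :=
    (summable_prod_of_nonneg hH2nn).mpr ⟨fun k => (hH2slice k).1,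
      Summable.of_nonneg_of_le (fun k => tsum_nonneg fun m => hH2nn (k, m))
        (fun k => (hH2slice k).2) hEk_sum⟩
  have hH2swap : Summable (fun q : ℕ × ℕ => H2 (q.2, q.1)) := hH2sum.prod_symm
  have hH2sliceK : ∀ m : ℕ, Summable fun k : ℕ => H2 (k, m) := fun m =>
    ((summable_prod_of_nonneg (fun q => hH2nn (q.2, q.1))).mp hH2swap).1 m
  have hGsum : Summable (fun q : ℕ × ℕ => term (hk q.1) s q.2) :=
    Summable.of_norm (Summable.of_nonneg_of_le (fun q => norm_nonneg _)
      (fun q => hterm_le q.1 q.2) hH2sum)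
  have hGslice1 : ∀ k, Summable fun m => term (hk k) s m := fun k =>
    (hcksum k).convolution (LSeriesSummable_dpow hbsum k)
  have hGslice2 : ∀ m, Summable fun k => term (hk k) s m := fun m =>
    Summable.of_norm (Summable.of_nonneg_of_le (fun k => norm_nonneg _)
      (fun k => hterm_le k m) (hH2sliceK m))
  have step6 : ∑' k : ℕ, ∑' m : ℕ, term (hk k) s m
      = ∑' m : ℕ, ∑' k : ℕ, term (hk k) s m :=
    (Summable.tsum_comm' (f := fun k m => term (hk k) s m) (by exact hGsum) hGslice1 hGslice2).symm
  have step7 : ∀ m : ℕ, ∑' k : ℕ, term (hk k) s m = term (Tmap c w b) s m := by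
    intro m
    have hzero : ∀ k ∉ range (m+1), term (hk k) s m = 0 := by
      intro k hkmem
      have hkgt : m < k := by simpa using Nat.lt_of_succ_le (le_of_not_gt (fun h =>
        hkmem (Finset.mem_range.mpr h)))
      rcases Nat.eq_zero_or_pos m with rfl | hm
      · exact term_zero _ _
      · have hhk : hk k m = 0 := by
          rw [hhkdef]
          simp only
          rw [conv_apply]
          refine Finset.sum_eq_zero fun p hp => ?_
          rcases Nat.mem_divisorsAntidiagonal.mp hp with ⟨h1, h2⟩
          have hp2m : p.2 ≤ m := Nat.le_of_dvd hm ⟨p.1, by rw [← h1, mul_comm]⟩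
          have : p.2 < 2 ^ k :=
            lt_of_le_of_lt hp2m (lt_of_lt_of_le (Nat.lt_two_pow_self (n := m))
              (Nat.pow_le_pow_right (by norm_num) (le_of_lt hkgt)))
          rw [dpow_eq_zero_of_lt_two_pow b hb1 k p.2 this, mul_zero]
        rw [term_of_ne_zero hm.ne', hhk, zero_div]
    rw [tsum_eq_sum hzero]
    rcases Nat.eq_zero_or_pos m with rfl | hm
    · rw [term_zero]
      exact Finset.sum_eq_zero fun k _ => term_zero _ _
    · rw [term_of_ne_zero hm.ne', Tmap, Finset.sum_div]
      exact Finset.sum_congr rfl fun k _ => term_of_ne_zero hm.ne' _ _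
  constructor
  · rw [step1, step2, tsum_congr step3]
    have : ∀ k : ℕ, LSeries (hk k) s = ∑' m : ℕ, term (hk k) s m := fun k => rfl
    rw [tsum_congr this, step6, tsum_congr step7]
    rw [DSeries_eq_LSeries (Tmap_apply_zero c w b) s, LSeries]
  · have hTm : ∀ m : ℕ, ‖Tmap c w b m‖ * (m : ℝ) ^ (-σ) ≤ ∑' k : ℕ, H2 (k, m) := by
      intro m
      have h1 : ‖Tmap c w b m‖ * (m : ℝ) ^ (-σ)
          ≤ (∑ k ∈ range (m+1), (eta c w k ⍟ dpow β k) m) * (m : ℝ) ^ (-σ) :=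
        mul_le_mul_of_nonneg_right (norm_Tmap_le c w b m) (by positivity)
      have h2 : (∑ k ∈ range (m+1), (eta c w k ⍟ dpow β k) m) * (m : ℝ) ^ (-σ)
          = ∑ k ∈ range (m+1), H2 (k, m) := by
        rw [Finset.sum_mul]
      refine h1.trans (h2.le.trans ?_)
      exact Summable.sum_le_tsum (range (m+1)) (fun k _ => hH2nn (k, m)) (hH2sliceK m)
    refine Summable.of_nonneg_of_le (fun m => by positivity) hTm ?_
    exact ((summable_prod_of_nonneg (fun q => hH2nn (q.2, q.1))).mp hH2swap).2

lemma norm_fun_eq_weighted {f : ℕ → ℂ} (hf0 : f 0 = 0) (s : ℂ) :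
    (fun n : ℕ => ‖f n * (n : ℂ) ^ (-s)‖) = fun n : ℕ => ‖f n‖ * (n : ℝ) ^ (-s.re) := by
  funext n
  cases n with
  | zero => simp [hf0]
  | succ n =>
    rw [norm_mul, Complex.norm_natCast_cpow_of_pos (Nat.succ_pos n), Complex.neg_re]

lemma rpow_base_le' {a b : ℝ} (ha : 0 < a) (hab : a ≤ b) {e : ℝ} (he : e ≤ 0) :
    b ^ e ≤ a ^ e := by
  have hb : 0 < b := lt_of_lt_of_le ha hab
  rw [Real.rpow_def_of_pos ha, Real.rpow_def_of_pos hb]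
  refine Real.exp_le_exp.mpr ?_
  have : Real.log a ≤ Real.log b := Real.log_le_log ha hab
  nlinarith

lemma weight_mono {f : ℕ → ℂ} (hf0 : f 0 = 0) {x y : ℝ} (hxy : x ≤ y) (m : ℕ) :
    ‖f m‖ * (m : ℝ) ^ (-y) ≤ ‖f m‖ * (m : ℝ) ^ (-x) := by
  cases m with
  | zero => simp [hf0]
  | succ m =>
    refine mul_le_mul_of_nonneg_left ?_ (norm_nonneg _)
    refine Real.rpow_le_rpow_of_exponent_le ?_ (by linarith)
    exact_mod_cast Nat.succ_le_succ (Nat.zero_le m)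

/-- Uniqueness of Dirichlet coefficients: if an absolutely convergent Dirichlet series
vanishes on a real half-line, all its coefficients vanish. -/
lemma coeff_unique {a : ℕ → ℂ} {t : ℝ} (ha0 : a 0 = 0)
    (hsum : ∀ x : ℝ, t < x → Summable fun n : ℕ => ‖a n‖ * (n : ℝ) ^ (-x))
    (hzero : ∀ x : ℝ, t < x → ∑' n : ℕ, a n * (n : ℂ) ^ (-((x : ℝ) : ℂ)) = 0) :
    ∀ m, a m = 0 := by
  intro m
  induction m using Nat.strong_induction_on with
  | _ m IH =>
  rcases Nat.eq_zero_or_pos m with rfl | hm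
  · exact ha0
  · set t1 : ℝ := t + 1 with ht1def
    have ht1 : t < t1 := by rw [ht1def]; linarith
    have hsum_shift : Summable fun n : ℕ => ‖a (n + (m+1))‖ * ((n + (m+1) : ℕ) : ℝ) ^ (-t1) :=
      (summable_nat_add_iff (f := fun n : ℕ => ‖a n‖ * (n : ℝ) ^ (-t1)) (m+1)).mpr
        (hsum t1 ht1)
    set K : ℝ := ∑' n : ℕ, ‖a (n + (m+1))‖ * ((n + (m+1) : ℕ) : ℝ) ^ (-t1) with hKdef
    have hK0 : 0 ≤ K := tsum_nonneg fun n => by positivity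
    have key : ∀ x : ℝ, t1 ≤ x →
        ‖a m‖ ≤ K * ((m+1 : ℕ) : ℝ) ^ t1 * ((m : ℝ) / ((m+1 : ℕ) : ℝ)) ^ x := by
      intro x hx
      have hxt : t < x := lt_of_lt_of_le ht1 hx
      have hsx := hsum x hxt
      have hsxc : Summable fun n : ℕ => a n * (n : ℂ) ^ (-((x : ℝ) : ℂ)) := by
        refine Summable.of_norm ?_
        rw [norm_fun_eq_weighted ha0]
        simpa using hsx
      have hdecomp := Summable.sum_add_tsum_nat_add (f := fun n : ℕ => a n * (n : ℂ) ^ (-((x:ℝ):ℂ)))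
        (m+1) hsxc
      have hfin : ∑ n ∈ range (m+1), a n * (n : ℂ) ^ (-((x:ℝ):ℂ))
          = a m * (m : ℂ) ^ (-((x:ℝ):ℂ)) := by
        refine Finset.sum_eq_single_of_mem m (Finset.self_mem_range_succ m) fun j hj hjm => ?_
        rw [IH j (lt_of_le_of_ne (Nat.lt_succ_iff.mp (Finset.mem_range.mp hj)) hjm), zero_mul]
      have htail : a m * (m : ℂ) ^ (-((x:ℝ):ℂ))
          = -∑' n : ℕ, a (n + (m+1)) * ((n + (m+1) : ℕ) : ℂ) ^ (-((x:ℝ):ℂ)) := by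
        have h0 := hzero x hxt
        rw [← hdecomp, hfin] at h0
        linear_combination h0
      have hnorm_m : ‖a m * (m : ℂ) ^ (-((x:ℝ):ℂ))‖ = ‖a m‖ * (m : ℝ) ^ (-x) := by
        rw [norm_mul, Complex.norm_natCast_cpow_of_pos hm]
        simp
      have hshift_x : Summable fun n : ℕ =>
          ‖a (n + (m+1))‖ * ((n + (m+1) : ℕ) : ℝ) ^ (-x) :=
        (summable_nat_add_iff (f := fun n : ℕ => ‖a n‖ * (n : ℝ) ^ (-x)) (m+1)).mpr hsx
      have htail_le : ‖∑' n : ℕ, a (n + (m+1)) * ((n + (m+1) : ℕ) : ℂ) ^ (-((x:ℝ):ℂ))‖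
          ≤ ((m+1 : ℕ) : ℝ) ^ (t1 - x) * K := by
        have hsummand : ∀ n : ℕ, ‖a (n + (m+1)) * ((n + (m+1) : ℕ) : ℂ) ^ (-((x:ℝ):ℂ))‖
            ≤ ((m+1 : ℕ) : ℝ) ^ (t1 - x)
              * (‖a (n + (m+1))‖ * ((n + (m+1) : ℕ) : ℝ) ^ (-t1)) := by
          intro n
          rw [norm_mul, Complex.norm_natCast_cpow_of_pos (by omega)]
          have hre : (-((x:ℝ):ℂ)).re = -x := by simp
          rw [hre]
          have hrpow : ((n + (m+1) : ℕ) : ℝ) ^ (-x)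
              = ((n + (m+1) : ℕ) : ℝ) ^ (t1 - x) * ((n + (m+1) : ℕ) : ℝ) ^ (-t1) := by
            rw [← Real.rpow_add (by positivity)]; ring_nf
          have hbase : ((n + (m+1) : ℕ) : ℝ) ^ (t1 - x) ≤ ((m+1 : ℕ) : ℝ) ^ (t1 - x) := by
            refine rpow_base_le' (by positivity) ?_ (by linarith)
            exact_mod_cast Nat.le_add_left (m+1) n
          rw [hrpow]
          calc ‖a (n + (m+1))‖ * (((n + (m+1) : ℕ) : ℝ) ^ (t1 - x)
                * ((n + (m+1) : ℕ) : ℝ) ^ (-t1))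
              ≤ ‖a (n + (m+1))‖ * (((m+1 : ℕ) : ℝ) ^ (t1 - x)
                * ((n + (m+1) : ℕ) : ℝ) ^ (-t1)) := by
                refine mul_le_mul_of_nonneg_left ?_ (norm_nonneg _)
                exact mul_le_mul_of_nonneg_right hbase (by positivity)
            _ = ((m+1 : ℕ) : ℝ) ^ (t1 - x)
                * (‖a (n + (m+1))‖ * ((n + (m+1) : ℕ) : ℝ) ^ (-t1)) := by ring
        refine le_trans (norm_tsum_le_tsum_norm ?_) ?_
        · refine Summable.of_nonneg_of_le (fun n => norm_nonneg _) hsummand ?_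
          exact hsum_shift.mul_left _
        · refine le_trans (Summable.tsum_le_tsum hsummand ?_ (hsum_shift.mul_left _)) ?_
          · refine Summable.of_nonneg_of_le (fun n => norm_nonneg _) hsummand ?_
            exact hsum_shift.mul_left _
          · rw [tsum_mul_left]
      -- combine
      have hmain : ‖a m‖ * (m : ℝ) ^ (-x) ≤ ((m+1 : ℕ) : ℝ) ^ (t1 - x) * K := by
        rw [← hnorm_m, htail, norm_neg]
        exact htail_le
      have hmpos : (0:ℝ) < (m : ℝ) := by exact_mod_cast hm
      have hmx : (0:ℝ) < (m : ℝ) ^ (-x) := Real.rpow_pos_of_pos hmpos _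
      have h2 : ‖a m‖ ≤ ((m+1 : ℕ) : ℝ) ^ (t1 - x) * K * (m : ℝ) ^ x := by
        have := mul_le_mul_of_nonneg_right hmain (le_of_lt (Real.rpow_pos_of_pos hmpos x))
        rw [mul_assoc, ← Real.rpow_add hmpos] at this
        simpa using this
      calc ‖a m‖ ≤ ((m+1 : ℕ) : ℝ) ^ (t1 - x) * K * (m : ℝ) ^ x := h2
        _ = K * ((m+1 : ℕ) : ℝ) ^ t1 * ((m : ℝ) / ((m+1 : ℕ) : ℝ)) ^ x := by
            rw [Real.div_rpow (le_of_lt hmpos) (by positivity),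
              Real.rpow_sub (by positivity : (0:ℝ) < ((m+1 : ℕ) : ℝ))]
            ring
    -- take the limit x → ∞
    have hr1 : (m : ℝ) / ((m+1 : ℕ) : ℝ) < 1 := by
      rw [div_lt_one (by positivity)]
      exact_mod_cast Nat.lt_succ_self m
    have hr0 : (-1:ℝ) < (m : ℝ) / ((m+1 : ℕ) : ℝ) := by
      have h : (0:ℝ) ≤ (m : ℝ) / ((m+1 : ℕ) : ℝ) := by positivity
      linarith
    have hlim : Filter.Tendsto (fun x : ℝ => K * ((m+1 : ℕ) : ℝ) ^ t1
        * ((m : ℝ) / ((m+1 : ℕ) : ℝ)) ^ x) Filter.atTop (nhds 0) := by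
      have := tendsto_rpow_atTop_of_base_lt_one _ hr0 hr1
      have h2 := this.const_mul (K * ((m+1 : ℕ) : ℝ) ^ t1)
      simpa using h2
    have hle0 : ‖a m‖ ≤ 0 := by
      refine ge_of_tendsto hlim ?_
      filter_upwards [Filter.eventually_ge_atTop t1] with x hx
      exact key x hx
    exact norm_le_zero_iff.mp hle0

/-- Choice of a half-plane where the weighted `ℓ¹` norm of `c` is at most 1. -/
lemma tail_le_one (hc0 : c 0 = 0) (hc1 : c 1 = 0) {σ0 : ℝ}
    (hA : Summable fun n : ℕ => ‖c n‖ * (n : ℝ) ^ (-σ0)) :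
    ∃ θ1 : ℝ, σ0 ≤ θ1 ∧ ∀ x : ℝ, θ1 ≤ x → ∑' n : ℕ, ‖c n‖ * (n : ℝ) ^ (-x) ≤ 1 := by
  set A : ℝ := ∑' n : ℕ, ‖c n‖ * (n : ℝ) ^ (-σ0) with hAdef
  obtain ⟨t0, ht0, hAt0⟩ : ∃ t0 : ℝ, 0 ≤ t0 ∧ A ≤ 2 ^ t0 := by
    rcases le_or_gt A 1 with h | h
    · exact ⟨0, le_rfl, by rw [Real.rpow_zero]; exact h⟩
    · refine ⟨Real.logb 2 A, ?_, ?_⟩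
      · exact Real.logb_nonneg (by norm_num) (le_of_lt h)
      · rw [Real.rpow_logb (by norm_num) (by norm_num) (by linarith)]
  refine ⟨σ0 + t0 + 1, by linarith, fun x hx => ?_⟩
  have hσx : σ0 ≤ x := by linarith
  calc ∑' n : ℕ, ‖c n‖ * (n : ℝ) ^ (-x) ≤ (2:ℝ) ^ (σ0 - x) * A := tsum_c_le hc0 hc1 hA hσx
    _ ≤ (2:ℝ) ^ (σ0 - x) * (2:ℝ) ^ t0 :=
        mul_le_mul_of_nonneg_left hAt0 (le_of_lt (Real.rpow_pos_of_pos (by norm_num) _))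
    _ = (2:ℝ) ^ (σ0 - x + t0) := by rw [← Real.rpow_add (by norm_num)]
    _ ≤ (2:ℝ) ^ (0:ℝ) := Real.rpow_le_rpow_of_exponent_le (by norm_num) (by linarith)
    _ = 1 := Real.rpow_zero 2

end Analytic

end Stmt14

open Stmt14 Finset

set_option maxHeartbeats 1000000 in
theorem stmt_14 (c : ℕ → ℂ) (hc : IsD0 c) (w : ℂ) :
    ∃ b : ℕ → ℂ, IsD0 b ∧
      (∃ θ : ℝ, ∀ s : ℂ, θ < s.re →
        DSeries c (s - w * DSeries b s) = DSeries b s) ∧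
      ∀ b' : ℕ → ℂ, IsD0 b' →
        (∃ θ : ℝ, ∀ s : ℂ, θ < s.re →
          DSeries c (s - w * DSeries b' s) = DSeries b' s) →
        b' = b := by
  classical
  obtain ⟨hc0, hc1, θ0, hθ0⟩ := hc
  set σ0 : ℝ := θ0 + 1 with hσ0def
  have hA : Summable fun n : ℕ => ‖c n‖ * (n : ℝ) ^ (-σ0) := by
    have h := hθ0 ((σ0 : ℝ) : ℂ) (by rw [Complex.ofReal_re, hσ0def]; linarith)
    rw [norm_fun_eq_weighted hc0] at h
    simpa using h
  obtain ⟨θ1, hθ1σ, hθ1⟩ := tail_le_one hc0 hc1 hA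
  set θ : ℝ := θ1 + ‖w‖ with hθdef
  set b : ℕ → ℂ := bseq c w with hbdef
  have hb0 : b 0 = 0 := bseq_apply_zero c w
  have hb1 : b 1 = 0 := bseq_apply_one c hc1 w
  have hθsub : θ - ‖w‖ = θ1 := by rw [hθdef]; ring
  have hθσ0 : σ0 ≤ θ - ‖w‖ := by rw [hθsub]; exact hθ1σ
  have hsum1 : ∑' n : ℕ, ‖c n‖ * (n : ℝ) ^ (-(θ - ‖w‖)) ≤ 1 := by
    rw [hθsub]; exact hθ1 θ1 le_rfl
  have hbpartθ : ∀ M, ∑ m ∈ range M, ‖b m‖ * (m : ℝ) ^ (-θ) ≤ 1 :=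
    fun M => bseq_sum_le hc0 hc1 hA hθσ0 hsum1 M
  have hbpart : ∀ s : ℂ, θ ≤ s.re →
      ∀ M, ∑ m ∈ range M, ‖b m‖ * (m : ℝ) ^ (-s.re) ≤ 1 := fun s hs M =>
    le_trans (Finset.sum_le_sum fun m _ => weight_mono hb0 hs m) (hbpartθ M)
  refine ⟨b, ⟨hb0, hb1, θ, fun s hs => ?_⟩, ⟨θ, fun s hs => ?_⟩, ?_⟩
  · -- absolute convergence of b in a half-plane
    rw [norm_fun_eq_weighted hb0]
    exact summable_of_sum_range_le (fun m => by positivity) (hbpart s (le_of_lt hs))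
  · -- the functional equation
    have hσ : σ0 ≤ s.re - ‖w‖ := by linarith
    have hk := key_identity hc0 hc1 hA hb0 hb1 hσ (hbpart s (le_of_lt hs))
    rw [hk.1]
    congr 1
    funext m
    exact (bseq_eq c hc1 w m).symm
  · -- uniqueness
    rintro b' ⟨hb'0, hb'1, θ2, hθ2⟩ ⟨θ3, heq⟩
    have hB'σ2 : Summable fun m : ℕ => ‖b' m‖ * (m : ℝ) ^ (-(θ2 + 1)) := by
      have h := hθ2 ((θ2 + 1 : ℝ) : ℂ) (by rw [Complex.ofReal_re]; linarith)
      rw [norm_fun_eq_weighted hb'0] at h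
      simpa using h
    obtain ⟨θ4, hθ4σ, hθ4⟩ := tail_le_one hb'0 hb'1 hB'σ2
    set X : ℝ := max (max θ3 θ4) (max θ (σ0 + ‖w‖)) with hXdef
    have hkey : ∀ x : ℝ, X < x →
        (Summable fun m : ℕ => ‖Tmap c w b' m‖ * (m : ℝ) ^ (-x)) ∧
        (Summable fun m : ℕ => ‖b' m‖ * (m : ℝ) ^ (-x)) ∧
        DSeries (Tmap c w b') ((x : ℝ) : ℂ) = DSeries b' ((x : ℝ) : ℂ) := by
      intro x hXx
      have hx3 : θ3 < x := lt_of_le_of_lt (le_trans (le_max_left θ3 θ4) (le_max_left _ _)) hXx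
      have hx4 : θ4 ≤ x :=
        le_of_lt (lt_of_le_of_lt (le_trans (le_max_right θ3 θ4) (le_max_left _ _)) hXx)
      have hxw : σ0 + ‖w‖ ≤ x :=
        le_of_lt (lt_of_le_of_lt (le_trans (le_max_right θ (σ0 + ‖w‖)) (le_max_right _ _)) hXx)
      have hx2 : θ2 + 1 ≤ x := le_trans hθ4σ hx4
      have hsb' : Summable fun m : ℕ => ‖b' m‖ * (m : ℝ) ^ (-x) :=
        Summable.of_nonneg_of_le (fun m => by positivity)
          (fun m => weight_mono hb'0 hx2 m) hB'σ2
      have hbpart' : ∀ M, ∑ m ∈ range M, ‖b' m‖ * (m : ℝ) ^ (-x) ≤ 1 := fun M =>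
        le_trans (Summable.sum_le_tsum (range M) (fun m _ => by positivity) hsb') (hθ4 x hx4)
      have hre : (((x : ℝ) : ℂ)).re = x := Complex.ofReal_re x
      have hk := key_identity hc0 hc1 hA hb'0 hb'1 (s := ((x : ℝ) : ℂ))
        (by rw [hre]; linarith) (by rw [hre]; exact hbpart')
      refine ⟨by rw [hre] at hk; exact hk.2, hsb', ?_⟩
      exact hk.1.symm.trans (heq _ (by rw [hre]; exact hx3))
    have hTb' : ∀ m, Tmap c w b' m - b' m = 0 := by
      refine coeff_unique (t := X) (a := fun m => Tmap c w b' m - b' m)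
        (by show Tmap c w b' 0 - b' 0 = 0; rw [Tmap_apply_zero, hb'0, sub_zero]) ?_ ?_
      · intro x hx
        obtain ⟨h1, h2, _⟩ := hkey x hx
        refine Summable.of_nonneg_of_le (fun m => by positivity) (fun m => ?_) (h1.add h2)
        calc ‖Tmap c w b' m - b' m‖ * (m : ℝ) ^ (-x)
            ≤ (‖Tmap c w b' m‖ + ‖b' m‖) * (m : ℝ) ^ (-x) :=
              mul_le_mul_of_nonneg_right (norm_sub_le _ _) (by positivity)
          _ = ‖Tmap c w b' m‖ * (m : ℝ) ^ (-x) + ‖b' m‖ * (m : ℝ) ^ (-x) := by ring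
      · intro x hx
        obtain ⟨h1, h2, h3⟩ := hkey x hx
        have hs1 : Summable fun m : ℕ => Tmap c w b' m * (m : ℂ) ^ (-((x : ℝ) : ℂ)) := by
          refine Summable.of_norm ?_
          rw [norm_fun_eq_weighted (Tmap_apply_zero c w b')]
          simpa using h1
        have hs2 : Summable fun m : ℕ => b' m * (m : ℂ) ^ (-((x : ℝ) : ℂ)) := by
          refine Summable.of_norm ?_
          rw [norm_fun_eq_weighted hb'0]
          simpa using h2
        have hsplit : (fun m : ℕ => (Tmap c w b' m - b' m) * (m : ℂ) ^ (-((x : ℝ) : ℂ)))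
            = fun m : ℕ => Tmap c w b' m * (m : ℂ) ^ (-((x : ℝ) : ℂ))
              - b' m * (m : ℂ) ^ (-((x : ℝ) : ℂ)) := by
          funext m; ring
        rw [hsplit, Summable.tsum_sub hs1 hs2]
        rw [DSeries, DSeries] at h3
        rw [h3, sub_self]
    funext m
    induction m using Nat.strong_induction_on with
    | _ m IH =>
      have h1 : b' m = Tmap c w b' m := (sub_eq_zero.mp (hTb' m)).symm
      rw [h1, Tmap_congr c hc1 w (fun j hj => IH j hj), ← bseq_eq c hc1 w m]
end
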